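/- arXiv:2603.11105 — 6 statements merged into one kernel-verified Lean document; each statement's English description precedes it below -/
import Mathlib

section
/- For all n ≥ 0, SOME-bar(n) ≥ 0; that is, over all overpartitions of n, the total sum of odd parts is at least the total sum of even parts. -/
/-- `SOMEbar n` : sum over all overpartitions of `n` (a partition of `n` together with a
set of overlined distinct parts) of (sum of odd parts) − (sum of even parts). -/
noncomputable def SOMEbar (n : ℕ) : ℤ :=
  ∑ p : Nat.Partition n, ∑ _S ∈ p.parts.toFinset.powerset,
    (((p.parts.filter (fun x => Odd x)).sum : ℤ)
      - ((p.parts.filter (fun x => Even x)).sum : ℤ))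

/-- number of overpartitions of `n`. -/
noncomputable def pbar (n : ℕ) : ℕ :=
  ∑ p : Nat.Partition n, p.parts.toFinset.powerset.card

/-- sum of odd divisors `d` of `a` with `a/d` odd, minus sum of even divisors `d`
of `a` with `a/d` odd (equal to `0` for `a = 0`). -/
def sigmaOE (a : ℕ) : ℤ :=
  (∑ d ∈ a.divisors.filter (fun d => Odd (a / d) ∧ Odd d), (d : ℤ))
    - (∑ d ∈ a.divisors.filter (fun d => Odd (a / d) ∧ Even d), (d : ℤ))

/-- sum of all parts equal to `b` appearing in all overpartitions of `n`. -/
noncomputable def Sbar (b n : ℕ) : ℕ :=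
  ∑ p : Nat.Partition n, ∑ _S ∈ p.parts.toFinset.powerset, p.parts.count b * b

/-- sum of all odd parts appearing in all overpartitions of `n`. -/
noncomputable def Sobar (n : ℕ) : ℕ :=
  ∑ p : Nat.Partition n, ∑ _S ∈ p.parts.toFinset.powerset,
    (p.parts.filter (fun x => Odd x)).sum

/-- sum of all even parts appearing in all overpartitions of `n`. -/
noncomputable def Sebar (n : ℕ) : ℕ :=
  ∑ p : Nat.Partition n, ∑ _S ∈ p.parts.toFinset.powerset,
    (p.parts.filter (fun x => Even x)).sum


open Finset

/-- weight: 1 if c = 0 else 2 -/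
def wfn (c : ℕ) : ℤ := if c = 0 then 1 else 2

noncomputable def Qz (b x : ℕ) : ℤ :=
  ∑ μ : Nat.Partition x, if b ∈ μ.parts then 0 else 2 ^ μ.parts.toFinset.card

noncomputable def Pz (x : ℕ) : ℤ := ∑ μ : Nat.Partition x, 2 ^ μ.parts.toFinset.card

lemma Qz_nonneg (b x : ℕ) : 0 ≤ Qz b x := by
  apply Finset.sum_nonneg; intro μ _; split <;> positivity

-- decomposition of parts
lemma parts_decomp (s : Multiset ℕ) (b : ℕ) :
    Multiset.filter (fun x => x ≠ b) s + Multiset.replicate (s.count b) b = s := by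
  have h1 : Multiset.filter (fun x => ¬ x ≠ b) s = Multiset.replicate (s.count b) b := by
    rw [← Multiset.filter_eq' s b]
    exact Multiset.filter_congr (by intro x _; simp)
  rw [← h1]
  exact Multiset.filter_add_not _ s

lemma sum_filter_ne (s : Multiset ℕ) (b : ℕ) :
    (Multiset.filter (fun x => x ≠ b) s).sum = s.sum - s.count b * b := by
  have h := congrArg Multiset.sum (parts_decomp s b)
  rw [Multiset.sum_add, Multiset.sum_replicate, smul_eq_mul] at h
  omega

lemma count_mul_le_sum (s : Multiset ℕ) (b : ℕ) : s.count b * b ≤ s.sum := by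
  have h := congrArg Multiset.sum (parts_decomp s b)
  rw [Multiset.sum_add, Multiset.sum_replicate, smul_eq_mul] at h
  omega

lemma filter_ne_of_notMem (s : Multiset ℕ) (b : ℕ) (h : b ∉ s) :
    s.filter (fun x => x ≠ b) = s := by
  have h2 := parts_decomp s b
  rwa [Multiset.count_eq_zero.2 h, Multiset.replicate_zero, add_zero] at h2

lemma fiberC (b c n : ℕ) (hb : 1 ≤ b) :
    (∑ p : Nat.Partition n, if p.parts.count b = c then (2:ℤ) ^ p.parts.toFinset.card else 0)
    = if b * c ≤ n then wfn c * Qz b (n - b * c) else 0 := by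
  by_cases hc : b * c ≤ n
  swap
  · rw [if_neg hc]
    apply Finset.sum_eq_zero
    intro p _
    rw [if_neg]
    intro hcount
    have := count_mul_le_sum p.parts b
    rw [hcount, p.parts_sum, mul_comm] at this
    omega
  rw [if_pos hc, Qz, Finset.mul_sum]
  rw [← Finset.sum_filter (fun p : Nat.Partition n => p.parts.count b = c)
    (fun p => (2:ℤ) ^ p.parts.toFinset.card)]
  have hrhs : ∀ μ : Nat.Partition (n - b * c),
      wfn c * (if b ∈ μ.parts then 0 else (2:ℤ) ^ μ.parts.toFinset.card)
      = if ¬ b ∈ μ.parts then wfn c * (2:ℤ) ^ μ.parts.toFinset.card else 0 := by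
    intro μ; by_cases h : b ∈ μ.parts <;> simp [h]
  rw [Finset.sum_congr rfl (fun μ _ => hrhs μ),
    ← Finset.sum_filter (fun μ : Nat.Partition (n - b*c) => ¬ b ∈ μ.parts)
    (fun μ => wfn c * (2:ℤ) ^ μ.parts.toFinset.card)]
  refine Finset.sum_bij'
    (i := fun (p : Nat.Partition n) (hp : p ∈ Finset.univ.filter (fun p => p.parts.count b = c)) =>
      (⟨p.parts.filter (fun x => x ≠ b),
        fun hi => p.parts_pos (Multiset.mem_filter.1 hi).1,
        by
          have hcnt : p.parts.count b = c := (Finset.mem_filter.1 hp).2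
          rw [sum_filter_ne, p.parts_sum, hcnt, mul_comm]⟩ : Nat.Partition (n - b * c)))
    (j := fun (μ : Nat.Partition (n - b*c)) (hμ : μ ∈ Finset.univ.filter (fun μ => ¬ b ∈ μ.parts)) =>
      (⟨μ.parts + Multiset.replicate c b,
        fun hi => by
          rcases Multiset.mem_add.1 hi with h | h
          · exact μ.parts_pos h
          · rw [Multiset.eq_of_mem_replicate h]; omega,
        by rw [Multiset.sum_add, μ.parts_sum, Multiset.sum_replicate, smul_eq_mul, mul_comm b c] at *
           omega⟩ : Nat.Partition n))
    ?_ ?_ ?_ ?_ ?_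
  · intro p hp
    simp only [Finset.mem_filter, Finset.mem_univ, true_and]
    simp [Multiset.mem_filter]
  · intro μ hμ
    simp only [Finset.mem_filter, Finset.mem_univ, true_and] at hμ ⊢
    rw [Multiset.count_add, Multiset.count_replicate_self,
      Multiset.count_eq_zero.2 hμ, zero_add]
  · intro p hp
    simp only [Finset.mem_filter, Finset.mem_univ, true_and] at hp
    ext1
    simp only
    rw [← hp]
    exact parts_decomp p.parts b
  · intro μ hμ
    simp only [Finset.mem_filter, Finset.mem_univ, true_and] at hμ
    ext1
    simp only
    rw [Multiset.filter_add]
    rw [filter_ne_of_notMem _ _ hμ,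
      Multiset.filter_eq_nil.2 (fun a ha => by simp [Multiset.eq_of_mem_replicate ha]),
      add_zero]
  · intro p hp
    simp only [Finset.mem_filter, Finset.mem_univ, true_and] at hp
    simp only
    by_cases hc0 : c = 0
    · subst hc0
      have hnb : b ∉ p.parts := Multiset.count_eq_zero.1 hp
      rw [filter_ne_of_notMem _ _ hnb]
      simp [wfn]
    · have hbmem : b ∈ p.parts := Multiset.count_pos.1 (by omega)
      have h1 : (Multiset.filter (fun x => x ≠ b) p.parts).toFinset
          = p.parts.toFinset.erase b := by
        rw [Multiset.toFinset_filter, Finset.filter_ne']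
      rw [h1]
      have h2 : (p.parts.toFinset.erase b).card + 1 = p.parts.toFinset.card :=
        Finset.card_erase_add_one (Multiset.mem_toFinset.2 hbmem)
      rw [← h2, pow_succ, wfn, if_neg hc0]
      ring

noncomputable def Cz (b n : ℕ) : ℤ :=
  ∑ p : Nat.Partition n, (p.parts.count b : ℤ) * 2 ^ p.parts.toFinset.card

lemma count_mem_range (b n : ℕ) (hb : 1 ≤ b) (p : Nat.Partition n) :
    p.parts.count b ∈ Finset.range (n+1) := by
  have h1 := count_mul_le_sum p.parts b
  have h2 := p.parts_sum
  have h3 : p.parts.count b ≤ p.parts.count b * b := Nat.le_mul_of_pos_right _ hb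
  exact Finset.mem_range.2 (by omega)

lemma sumA (b n : ℕ) (hb : 1 ≤ b) :
    Pz n = ∑ c ∈ Finset.range (n+1), (if b * c ≤ n then wfn c * Qz b (n - b * c) else 0) := by
  rw [Pz, ← Finset.sum_fiberwise_of_maps_to
      (g := fun p : Nat.Partition n => p.parts.count b)
      (fun p _ => count_mem_range b n hb p)
      (fun p => (2:ℤ) ^ p.parts.toFinset.card)]
  exact Finset.sum_congr rfl fun c _ => by rw [Finset.sum_filter, fiberC b c n hb]

lemma sumB (b n : ℕ) (hb : 1 ≤ b) :
    Cz b n = ∑ c ∈ Finset.range (n+1),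
      (c : ℤ) * (if b * c ≤ n then wfn c * Qz b (n - b * c) else 0) := by
  rw [Cz, ← Finset.sum_fiberwise_of_maps_to
      (g := fun p : Nat.Partition n => p.parts.count b)
      (fun p _ => count_mem_range b n hb p)
      (fun p => (p.parts.count b : ℤ) * 2 ^ p.parts.toFinset.card)]
  refine Finset.sum_congr rfl fun c _ => ?_
  rw [← fiberC b c n hb, Finset.mul_sum, Finset.sum_filter]
  refine Finset.sum_congr rfl fun p _ => ?_
  by_cases h : p.parts.count b = c
  · rw [if_pos h, if_pos h, h]
  · rw [if_neg h, if_neg h, mul_zero]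

lemma hPexp (b n : ℕ) (hb : 1 ≤ b) (k : ℕ) :
    (if b * k ≤ n then Pz (n - b * k) else 0)
    = ∑ c ∈ Finset.range (n+1),
        wfn c * (if b * (k + c) ≤ n then Qz b (n - b * (k + c)) else 0) := by
  by_cases hk : b * k ≤ n
  · rw [if_pos hk, sumA b (n - b * k) hb]
    rw [Finset.sum_subset (Finset.range_subset_range.2 (by omega : n - b*k + 1 ≤ n + 1))]
    · refine Finset.sum_congr rfl fun c _ => ?_
      have hadd : b * (k + c) = b * k + b * c := by ring
      by_cases hc : b * c ≤ n - b * k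
      · rw [if_pos hc, if_pos (by omega), Nat.sub_sub, ← hadd]
      · rw [if_neg hc, if_neg (by omega), mul_zero]
    · intro c hc hnc
      rw [if_neg, ]
      simp only [Finset.mem_range] at hc hnc
      have : n - b * k < c := by omega
      have hcb : c ≤ b * c := Nat.le_mul_of_pos_left _ hb
      omega
  · rw [if_neg hk]
    symm
    apply Finset.sum_eq_zero
    intro c _
    rw [if_neg (by
      intro h
      exact hk (le_trans (Nat.mul_le_mul_left b (by omega : k ≤ k + c)) h)), mul_zero]

lemma conv (N : ℕ) (a w' h : ℕ → ℤ) (hh : ∀ t, N < t → h t = 0) :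
    ∑ m ∈ Finset.range (N+1), ∑ c ∈ Finset.range (N+1), a m * w' c * h (m + c)
    = ∑ t ∈ Finset.range (N+1), (∑ m ∈ Finset.range (t+1), a m * w' (t - m)) * h t := by
  have hL : ∑ m ∈ Finset.range (N+1), ∑ c ∈ Finset.range (N+1), a m * w' c * h (m + c)
      = ∑ x ∈ (Finset.range (N+1) ×ˢ Finset.range (N+1)).filter (fun x => x.1 + x.2 ≤ N),
          a x.1 * w' x.2 * h (x.1 + x.2) := by
    rw [← Finset.sum_product']
    symm
    apply Finset.sum_subset (Finset.filter_subset _ _)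
    intro x _ hnx
    rw [hh _ (by
      by_contra hle
      exact hnx (Finset.mem_filter.2 ⟨by assumption, by omega⟩)), mul_zero]
  rw [hL]
  have hR : ∑ t ∈ Finset.range (N+1), (∑ m ∈ Finset.range (t+1), a m * w' (t - m)) * h t
      = ∑ x ∈ (Finset.range (N+1)).sigma (fun t => Finset.range (t+1)),
          a x.2 * w' (x.1 - x.2) * h x.1 := by
    calc ∑ t ∈ Finset.range (N+1), (∑ m ∈ Finset.range (t+1), a m * w' (t - m)) * h t
        = ∑ t ∈ Finset.range (N+1), ∑ m ∈ Finset.range (t+1), a m * w' (t - m) * h t :=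
          Finset.sum_congr rfl fun t _ => by rw [Finset.sum_mul]
      _ = _ := Finset.sum_sigma' (Finset.range (N+1)) (fun t => Finset.range (t+1))
          (fun t m => a m * w' (t - m) * h t)
  rw [hR]
  refine Finset.sum_bij' (i := fun x _ => (⟨x.1 + x.2, x.1⟩ : (_ : ℕ) × ℕ))
    (j := fun y _ => ((y.2, y.1 - y.2) : ℕ × ℕ)) ?_ ?_ ?_ ?_ ?_
  · intro x hx
    simp only [Finset.mem_filter, Finset.mem_product, Finset.mem_range] at hx
    simp only [Finset.mem_sigma, Finset.mem_range]
    omega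
  · intro y hy
    simp only [Finset.mem_sigma, Finset.mem_range] at hy
    simp only [Finset.mem_filter, Finset.mem_product, Finset.mem_range]
    omega
  · intro x hx
    simp only [Finset.mem_filter, Finset.mem_product, Finset.mem_range] at hx
    simp only [Nat.add_sub_cancel_left]
  · intro y hy
    simp only [Finset.mem_sigma, Finset.mem_range] at hy
    simp only
    congr 1 <;> omega
  · intro x hx
    simp only [Nat.add_sub_cancel_left]

lemma oddcount (t : ℕ) :
    (∑ m ∈ Finset.range t, if Odd m then (1:ℤ) else 0) = ((t/2 : ℕ) : ℤ) := by
  induction t with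
  | zero => simp
  | succ t ih =>
    rw [Finset.sum_range_succ, ih]
    by_cases h : Odd t
    · rw [if_pos h]
      rw [Nat.odd_iff] at h
      have : (t+1)/2 = t/2 + 1 := by omega
      rw [this]; push_cast; ring
    · rw [if_neg h]
      rw [Nat.not_odd_iff_even, Nat.even_iff] at h
      have : (t+1)/2 = t/2 := by omega
      rw [this]; ring

lemma altsum (t : ℕ) :
    (∑ k ∈ Finset.range t, (-1:ℤ)^(k+1) * k) = (-1)^t * ((t/2 : ℕ) : ℤ) := by
  induction t with
  | zero => simp
  | succ t ih =>
    rw [Finset.sum_range_succ, ih, pow_succ (-1:ℤ) t]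
    by_cases h : Odd t
    · rw [Odd.neg_one_pow h]
      rw [Nat.odd_iff] at h
      have hd : (t+1)/2 = t/2 + 1 := by omega
      have h2 : (t : ℤ) = 2 * ((t/2 : ℕ) : ℤ) + 1 := by
        have : t = 2 * (t/2) + 1 := by omega
        exact_mod_cast congrArg (Nat.cast : ℕ → ℤ) this
      rw [hd, Nat.cast_add, Nat.cast_one, h2]; ring
    · rw [Nat.not_odd_iff_even] at h
      rw [Even.neg_one_pow h]
      rw [Nat.even_iff] at h
      have : (t+1)/2 = t/2 := by omega
      rw [this]
      have h2 : (t : ℤ) = 2 * ((t/2 : ℕ) : ℤ) := by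
        have : t = 2 * (t/2) := by omega
        exact_mod_cast congrArg (Nat.cast : ℕ → ℤ) this
      rw [h2]; ring

lemma wfn_pos_arg {x : ℕ} (h : x ≠ 0) : wfn x = 2 := if_neg h

lemma coef1 (t : ℕ) :
    (∑ m ∈ Finset.range (t+1), (if Odd m then (2:ℤ) else 0) * wfn (t - m))
    = (t : ℤ) * wfn t := by
  rw [Finset.sum_range_succ]
  have h1 : ∑ m ∈ Finset.range t, (if Odd m then (2:ℤ) else 0) * wfn (t - m)
      = ∑ m ∈ Finset.range t, (if Odd m then (1:ℤ) else 0) * 4 := by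
    refine Finset.sum_congr rfl fun m hm => ?_
    rw [wfn_pos_arg (by have := Finset.mem_range.1 hm; omega)]
    by_cases h : Odd m <;> simp [h]
  rw [h1, ← Finset.sum_mul, oddcount, Nat.sub_self]
  by_cases h : Odd t
  · have ht : t ≠ 0 := by rintro rfl; exact (Nat.not_odd_iff_even.2 (by decide)) h
    have h' := Nat.odd_iff.1 h
    have h2 : (t : ℤ) = 2 * ((t/2 : ℕ) : ℤ) + 1 := by
      have : t = 2 * (t/2) + 1 := by omega
      exact_mod_cast congrArg (Nat.cast : ℕ → ℤ) this
    rw [if_pos h, wfn_pos_arg ht, show wfn 0 = 1 from rfl, h2]; ring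
  · rw [if_neg h]
    have h' := Nat.even_iff.1 (Nat.not_odd_iff_even.1 h)
    have h2 : (t : ℤ) = 2 * ((t/2 : ℕ) : ℤ) := by
      have : t = 2 * (t/2) := by omega
      exact_mod_cast congrArg (Nat.cast : ℕ → ℤ) this
    by_cases ht : t = 0
    · subst ht; simp [wfn]
    · rw [wfn_pos_arg ht, show wfn 0 = 1 from rfl, h2]; ring

lemma coef2 (t : ℕ) :
    (∑ k ∈ Finset.range (t+1), ((-1:ℤ))^(k+1) * (k : ℤ) * wfn (t - k))
    = if Odd t then 1 else 0 := by
  rw [Finset.sum_range_succ]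
  have h1 : ∑ k ∈ Finset.range t, (-1:ℤ)^(k+1) * (k:ℤ) * wfn (t - k)
      = ∑ k ∈ Finset.range t, ((-1:ℤ)^(k+1) * (k:ℤ)) * 2 := by
    refine Finset.sum_congr rfl fun k hk => ?_
    rw [wfn_pos_arg (by have := Finset.mem_range.1 hk; omega)]
  rw [h1, ← Finset.sum_mul, altsum, Nat.sub_self]
  show (-1:ℤ)^t * ((t/2 : ℕ) : ℤ) * 2 + (-1)^(t+1) * (t:ℤ) * wfn 0 = _
  rw [show wfn 0 = 1 from rfl, pow_succ]
  by_cases h : Odd t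
  · have h' := Nat.odd_iff.1 h
    have h2 : (t : ℤ) = 2 * ((t/2 : ℕ) : ℤ) + 1 := by
      have : t = 2 * (t/2) + 1 := by omega
      exact_mod_cast congrArg (Nat.cast : ℕ → ℤ) this
    rw [if_pos h, Odd.neg_one_pow h, h2]; ring
  · have he := Nat.not_odd_iff_even.1 h
    have h' := Nat.even_iff.1 he
    have h2 : (t : ℤ) = 2 * ((t/2 : ℕ) : ℤ) := by
      have : t = 2 * (t/2) := by omega
      exact_mod_cast congrArg (Nat.cast : ℕ → ℤ) this
    rw [if_neg h, Even.neg_one_pow he, h2]; ring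

lemma hQzero (b n : ℕ) (hb : 1 ≤ b) :
    ∀ t, n < t → (if b * t ≤ n then Qz b (n - b * t) else 0) = 0 := by
  intro t ht
  rw [if_neg]
  have : t ≤ b * t := Nat.le_mul_of_pos_left _ hb
  omega

lemma stepI (b n : ℕ) (hb : 1 ≤ b) :
    Cz b n = ∑ m ∈ Finset.range (n+1),
      (if Odd m then (2:ℤ) else 0) * (if b * m ≤ n then Pz (n - b * m) else 0) := by
  calc Cz b n
      = ∑ c ∈ Finset.range (n+1),
          ((c : ℤ) * wfn c) * (if b * c ≤ n then Qz b (n - b * c) else 0) := by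
        rw [sumB b n hb]
        refine Finset.sum_congr rfl fun c _ => ?_
        by_cases h : b * c ≤ n
        · rw [if_pos h, if_pos h]; ring
        · rw [if_neg h, if_neg h]; ring
    _ = ∑ t ∈ Finset.range (n+1),
          (∑ m ∈ Finset.range (t+1), (if Odd m then (2:ℤ) else 0) * wfn (t - m))
            * (if b * t ≤ n then Qz b (n - b * t) else 0) :=
        Finset.sum_congr rfl fun t _ => by rw [coef1]
    _ = ∑ m ∈ Finset.range (n+1), ∑ c ∈ Finset.range (n+1),
          (if Odd m then (2:ℤ) else 0) * wfn c
            * (if b * (m + c) ≤ n then Qz b (n - b * (m + c)) else 0) :=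
        (conv n (fun m => if Odd m then (2:ℤ) else 0) wfn
          (fun t => if b * t ≤ n then Qz b (n - b * t) else 0) (hQzero b n hb)).symm
    _ = _ := by
        refine Finset.sum_congr rfl fun m _ => ?_
        rw [hPexp b n hb m, Finset.mul_sum]
        exact Finset.sum_congr rfl fun c _ => by ring

lemma stepII (j n : ℕ) (hj : 1 ≤ j) :
    ∑ k ∈ Finset.range (n+1),
        ((-1:ℤ))^(k+1) * (k:ℤ) * (if j * k ≤ n then Pz (n - j * k) else 0)
    = ∑ m ∈ Finset.range (n+1),
        (if Odd m then (1:ℤ) else 0) * (if j * m ≤ n then Qz j (n - j * m) else 0) := by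
  calc ∑ k ∈ Finset.range (n+1),
        ((-1:ℤ))^(k+1) * (k:ℤ) * (if j * k ≤ n then Pz (n - j * k) else 0)
      = ∑ k ∈ Finset.range (n+1), ∑ c ∈ Finset.range (n+1),
          ((-1:ℤ))^(k+1) * (k:ℤ) * wfn c
            * (if j * (k + c) ≤ n then Qz j (n - j * (k + c)) else 0) := by
        refine Finset.sum_congr rfl fun k _ => ?_
        rw [hPexp j n hj k, Finset.mul_sum]
        exact Finset.sum_congr rfl fun c _ => by ring
    _ = ∑ t ∈ Finset.range (n+1),
          (∑ k ∈ Finset.range (t+1), ((-1:ℤ))^(k+1) * (k:ℤ) * wfn (t - k))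
            * (if j * t ≤ n then Qz j (n - j * t) else 0) :=
        conv n (fun k => ((-1:ℤ))^(k+1) * (k:ℤ)) wfn
          (fun t => if j * t ≤ n then Qz j (n - j * t) else 0) (hQzero j n hj)
    _ = _ := Finset.sum_congr rfl fun t _ => by rw [coef2]

lemma msum_count (N : ℕ) (s : Multiset ℕ) (hs : ∀ x ∈ s, x < N) :
    s.sum = ∑ b ∈ Finset.range N, s.count b * b := by
  induction s using Multiset.induction with
  | empty => simp
  | cons a s ih =>
    have ha : a < N := hs a (Multiset.mem_cons_self a s)
    have ih' := ih (fun x hx => hs x (Multiset.mem_cons_of_mem hx))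
    rw [Multiset.sum_cons, ih']
    have key : ∀ b, Multiset.count b (a ::ₘ s) * b
        = (if b = a then b else 0) + Multiset.count b s * b := by
      intro b
      rw [Multiset.count_cons]
      by_cases h : b = a
      · rw [if_pos h, if_pos h]; ring
      · rw [if_neg h, if_neg h]; ring
    rw [Finset.sum_congr rfl (fun b _ => key b), Finset.sum_add_distrib,
      Finset.sum_ite_eq' (Finset.range N) a (fun b => b), if_pos (Finset.mem_range.2 ha)]

lemma filter_msum_count (N : ℕ) (s : Multiset ℕ) (hs : ∀ x ∈ s, x < N)
    (P : ℕ → Prop) [DecidablePred P] :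
    (s.filter P).sum = ∑ b ∈ Finset.range N, if P b then s.count b * b else 0 := by
  rw [msum_count N (s.filter P) (fun x hx => hs x (Multiset.mem_filter.1 hx).1)]
  refine Finset.sum_congr rfl fun b _ => ?_
  rw [Multiset.count_filter]
  by_cases h : P b
  · rw [if_pos h, if_pos h]
  · rw [if_neg h, if_neg h, zero_mul]

lemma parts_lt (n : ℕ) (p : Nat.Partition n) : ∀ x ∈ p.parts, x < n + 1 := by
  intro x hx
  have := Multiset.le_sum_of_mem hx
  rw [p.parts_sum] at this
  omega

lemma oe_decomp (n : ℕ) (p : Nat.Partition n) :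
    ((p.parts.filter (fun x => Odd x)).sum : ℤ)
      - ((p.parts.filter (fun x => Even x)).sum : ℤ)
    = ∑ b ∈ Finset.range (n+1), (-1:ℤ)^(b+1) * b * p.parts.count b := by
  rw [filter_msum_count (n+1) p.parts (parts_lt n p) (fun x => Odd x),
    filter_msum_count (n+1) p.parts (parts_lt n p) (fun x => Even x)]
  push_cast
  rw [← Finset.sum_sub_distrib]
  refine Finset.sum_congr rfl fun b _ => ?_
  by_cases h : Odd b
  · rw [if_pos h, if_neg (Nat.not_even_iff_odd.2 h), Even.neg_one_pow (Odd.add_one h)]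
    push_cast; ring
  · rw [if_neg h, if_pos (Nat.not_odd_iff_even.1 h)]
    have : Odd (b + 1) := Even.add_one (Nat.not_odd_iff_even.1 h)
    rw [Odd.neg_one_pow this]
    push_cast; ring

lemma SOMEbar_eq_Cz (n : ℕ) :
    SOMEbar n = ∑ b ∈ Finset.range (n+1), (-1:ℤ)^(b+1) * b * Cz b n := by
  rw [SOMEbar]
  have h1 : ∀ p : Nat.Partition n,
      (∑ _S ∈ p.parts.toFinset.powerset,
        (((p.parts.filter (fun x => Odd x)).sum : ℤ)
          - ((p.parts.filter (fun x => Even x)).sum : ℤ)))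
      = ∑ b ∈ Finset.range (n+1),
          (-1:ℤ)^(b+1) * b * p.parts.count b * 2 ^ p.parts.toFinset.card := by
    intro p
    rw [Finset.sum_const, Finset.card_powerset, oe_decomp n p, nsmul_eq_mul,
      Finset.mul_sum]
    refine Finset.sum_congr rfl fun b _ => ?_
    push_cast
    ring
  rw [Finset.sum_congr rfl (fun p _ => h1 p), Finset.sum_comm]
  refine Finset.sum_congr rfl fun b _ => ?_
  rw [Cz, Finset.mul_sum]
  exact Finset.sum_congr rfl fun p _ => by ring

theorem stmt_2 : ∀ n : ℕ, 0 ≤ SOMEbar n := by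
  intro n
  rw [SOMEbar_eq_Cz n]
  have hbig : ∑ b ∈ Finset.range (n+1), (-1:ℤ)^(b+1) * b * Cz b n
      = ∑ b ∈ Finset.range (n+1), ∑ m ∈ Finset.range (n+1),
          (-1:ℤ)^(b+1) * b * ((if Odd m then (2:ℤ) else 0)
            * (if b * m ≤ n then Pz (n - b * m) else 0)) := by
    refine Finset.sum_congr rfl fun b _ => ?_
    by_cases hb : b = 0
    · subst hb; simp
    · rw [stepI b n (by omega), Finset.mul_sum]
  rw [hbig, Finset.sum_comm]
  apply Finset.sum_nonneg
  intro j _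
  by_cases hj : Odd j
  swap
  · apply Finset.sum_nonneg
    intro k _
    rw [if_neg hj]
    simp
  have hj1 : 1 ≤ j := by
    rcases hj with ⟨c, hc⟩; omega
  have heq : ∑ k ∈ Finset.range (n+1),
      (-1:ℤ)^(k+1) * k * ((if Odd j then (2:ℤ) else 0)
        * (if k * j ≤ n then Pz (n - k * j) else 0))
      = 2 * ∑ k ∈ Finset.range (n+1),
        (-1:ℤ)^(k+1) * k * (if j * k ≤ n then Pz (n - j * k) else 0) := by
    rw [Finset.mul_sum]
    refine Finset.sum_congr rfl fun k _ => ?_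
    rw [if_pos hj, mul_comm k j]
    ring
  rw [heq, stepII j n hj1]
  apply mul_nonneg (by norm_num)
  apply Finset.sum_nonneg
  intro m _
  apply mul_nonneg
  · split <;> norm_num
  · split
    · exact Qz_nonneg _ _
    · exact le_refl 0
end

section
/- For all n ≥ 0, SOME-bar(n) = 2 · Σ_{k=0}^{n} p-bar(k) · σ_{o−e}(n−k), where σ_{o−e}(a) is the sum of odd divisors d of a with a/d odd, minus the sum of even divisors d of a with a/d odd (and σ_{o−e}(0) = 0). -/
/-!
Write `S̄_b(n)` for the total of the parts equal to `b` over all overpartitions of `n`, so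
that `SOME-bar(n) = ∑_{b odd} S̄_b(n) - ∑_{b even} S̄_b(n)`. Removing one copy of `b` from an
overpartition containing it gives `S̄_b(n) = S̄_b(n - b) + b M_b(n)`, where `M_b(n)` counts the
overpartitions of `n` having `b` as a part; and `M_b(n) + M_b(n - b) = 2 p̄(n - b)`, because
adding a part `b` doubles the number of overlinings exactly when `b` was not a part yet. Hence
`S̄_b(n) = S̄_b(n - 2b) + 2b p̄(n - b)`, that is `S̄_b(n) = 2b ∑_{j odd} p̄(n - jb)`. Summing
against `±b` and regrouping by `a = jb` produces the divisor sums `σ_{o-e}(a)`.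
-/

open Finset

theorem Nat.Partition.sum_ite_mem_parts {M : Type*} [AddCommMonoid M] {n b : ℕ} (hb : 0 < b)
    (hbn : b ≤ n) (f : Multiset ℕ → M) :
    ∑ p : n.Partition, (if b ∈ p.parts then f p.parts else 0)
      = ∑ q : (n - b).Partition, f (b ::ₘ q.parts) := by
  rw [← sum_filter, sum_subtype (p := fun p : n.Partition => b ∈ p.parts) _ (by simp),
    ← (partitionWithPartEquiv hb hbn).symm.sum_comp]
  simp

def overlineCount (s : Multiset ℕ) : ℕ := 2 ^ s.toFinset.card

theorem overlineCount_cons (b : ℕ) (s : Multiset ℕ) :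
    overlineCount (b ::ₘ s) = if b ∈ s then overlineCount s else 2 * overlineCount s := by
  unfold overlineCount
  split_ifs with h
  · simp [h]
  · rw [Multiset.toFinset_cons, card_insert_of_notMem (by simpa using h), pow_succ, mul_comm]

theorem pbar_eq_sum_overlineCount (n : ℕ) : pbar n = ∑ p : n.Partition, overlineCount p.parts := by
  simp [pbar, overlineCount]

theorem Sbar_eq_sum_overlineCount (b n : ℕ) :
    Sbar b n = ∑ p : n.Partition,
      (if b ∈ p.parts then b * p.parts.count b * overlineCount p.parts else 0) := by
  unfold Sbar overlineCount
  refine sum_congr rfl fun p _ => ?_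
  split_ifs with h
  · rw [sum_const, card_powerset, smul_eq_mul]
    ring
  · simp [Multiset.count_eq_zero.2 h]

noncomputable def pbarWith (b n : ℕ) : ℕ :=
  ∑ p : n.Partition, if b ∈ p.parts then overlineCount p.parts else 0

theorem pbarWith_of_lt {b n : ℕ} (h : n < b) : pbarWith b n = 0 :=
  sum_eq_zero fun _ _ => if_neg fun hb => (Nat.Partition.le_of_mem_parts hb).not_gt h

theorem Sbar_of_lt {b n : ℕ} (h : n < b) : Sbar b n = 0 := by
  rw [Sbar_eq_sum_overlineCount]
  exact sum_eq_zero fun _ _ => if_neg fun hb => (Nat.Partition.le_of_mem_parts hb).not_gt h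

theorem pbarWith_add_pbarWith_sub {b n : ℕ} (hb : 0 < b) (hbn : b ≤ n) :
    pbarWith b n + pbarWith b (n - b) = 2 * pbar (n - b) := by
  rw [pbarWith, pbarWith, Nat.Partition.sum_ite_mem_parts hb hbn, ← sum_add_distrib,
    pbar_eq_sum_overlineCount, mul_sum]
  refine sum_congr rfl fun q _ => ?_
  rw [overlineCount_cons]
  split_ifs <;> ring

theorem Sbar_eq_Sbar_sub_add {b n : ℕ} (hb : 0 < b) (hbn : b ≤ n) :
    Sbar b n = Sbar b (n - b) + b * pbarWith b n := by
  have hS := Nat.Partition.sum_ite_mem_parts hb hbn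
    fun s => b * s.count b * overlineCount s
  have hM := Nat.Partition.sum_ite_mem_parts hb hbn overlineCount
  rw [Sbar_eq_sum_overlineCount, hS, Sbar_eq_sum_overlineCount, pbarWith, hM, mul_sum,
    ← sum_add_distrib]
  refine sum_congr rfl fun q _ => ?_
  rw [Multiset.count_cons_self, overlineCount_cons]
  split_ifs with h
  · ring
  · simp [Multiset.count_eq_zero.2 h]

theorem Sbar_of_lt_two_mul {b n : ℕ} (h : n < 2 * b) :
    Sbar b n = if b ≤ n then 2 * b * pbar (n - b) else 0 := by
  split_ifs with hbn
  · have hb : 0 < b := by omega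
    have hM := pbarWith_add_pbarWith_sub hb hbn
    rw [pbarWith_of_lt (by omega : n - b < b), add_zero] at hM
    rw [Sbar_eq_Sbar_sub_add hb hbn, Sbar_of_lt (by omega : n - b < b), hM]
    ring
  · exact Sbar_of_lt (by omega)

theorem Sbar_add_two_mul {b : ℕ} (hb : 0 < b) (n : ℕ) :
    Sbar b (n + 2 * b) = Sbar b n + 2 * b * pbar (n + b) := by
  have hS₂ := Sbar_eq_Sbar_sub_add hb (n := n + 2 * b) (by omega)
  have hS₁ := Sbar_eq_Sbar_sub_add hb (n := n + b) (by omega)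
  have hM := pbarWith_add_pbarWith_sub hb (n := n + 2 * b) (by omega)
  rw [show n + 2 * b - b = n + b by omega] at hS₂ hM
  rw [Nat.add_sub_cancel] at hS₁
  rw [hS₂, hS₁, add_assoc, ← mul_add, add_comm (pbarWith b (n + b)), hM]
  ring

/-- `∑_{j odd, j * b ≤ n} pbar (n - j * b)`: for `b > 0`, `a % (2 * b) = b` says that `a` is an
odd multiple of `b`. -/
noncomputable def oddMultipleSum (b n : ℕ) : ℕ :=
  ∑ a ∈ range (n + 1), if a % (2 * b) = b then pbar (n - a) else 0

theorem sum_range_ite_mod_two_mul_eq {M : Type*} [AddCommMonoid M] {b N : ℕ} (hN : N ≤ 2 * b)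
    (g : ℕ → M) :
    ∑ a ∈ range N, (if a % (2 * b) = b then g a else 0) = if b < N then g b else 0 := by
  calc _ = ∑ a ∈ range N, (if a = b then g a else 0) :=
        sum_congr rfl fun a ha => by rw [Nat.mod_eq_of_lt (by simp at ha; omega)]
    _ = _ := by simp

theorem oddMultipleSum_of_lt_two_mul {b n : ℕ} (h : n < 2 * b) :
    oddMultipleSum b n = if b ≤ n then pbar (n - b) else 0 := by
  rw [oddMultipleSum, sum_range_ite_mod_two_mul_eq (by omega)]
  simp only [Nat.lt_succ_iff]

theorem oddMultipleSum_add_two_mul {b : ℕ} (hb : 0 < b) (n : ℕ) :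
    oddMultipleSum b (n + 2 * b) = oddMultipleSum b n + pbar (n + b) := by
  rw [oddMultipleSum, show n + 2 * b + 1 = 2 * b + (n + 1) by ring, sum_range_add,
    sum_range_ite_mod_two_mul_eq le_rfl, add_comm, oddMultipleSum]
  congr 1
  · refine sum_congr rfl fun a _ => ?_
    rw [Nat.add_mod_left, show n + 2 * b - (2 * b + a) = n - a by omega]
  · rw [if_pos (by omega), show n + 2 * b - b = n + b by omega]

theorem Sbar_eq_two_mul_oddMultipleSum (b n : ℕ) : Sbar b n = 2 * b * oddMultipleSum b n := by
  rcases b.eq_zero_or_pos with rfl | hb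
  · simp [Sbar]
  induction n using Nat.strong_induction_on with
  | _ n ih =>
    rcases lt_or_ge n (2 * b) with h | h
    · rw [Sbar_of_lt_two_mul h, oddMultipleSum_of_lt_two_mul h]
      split_ifs <;> simp
    · obtain ⟨m, rfl⟩ := Nat.exists_eq_add_of_le' h
      rw [Sbar_add_two_mul hb, oddMultipleSum_add_two_mul hb, ih m (by omega)]
      ring

theorem Nat.Partition.sum_filter_parts {n : ℕ} (p : n.Partition) (P : ℕ → Prop) [DecidablePred P] :
    (p.parts.filter P).sum = ∑ b ∈ (range (n + 1)).filter P, p.parts.count b * b := by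
  rw [sum_multiset_count_of_subset _ _ fun b hb => by
    simp only [Multiset.mem_toFinset, Multiset.mem_filter] at hb
    exact mem_filter.2 ⟨mem_range.2 (Nat.lt_succ_of_le (p.le_of_mem_parts hb.1)), hb.2⟩]
  refine sum_congr rfl fun b hb => ?_
  rw [Multiset.count_filter_of_pos (mem_filter.1 hb).2, smul_eq_mul]

theorem sum_overpartitions_sum_filter_parts (n : ℕ) (P : ℕ → Prop) [DecidablePred P] :
    ∑ p : n.Partition, ∑ _S ∈ p.parts.toFinset.powerset, (p.parts.filter P).sum
      = ∑ b ∈ (range (n + 1)).filter P, Sbar b n := by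
  simp only [Sbar, Nat.Partition.sum_filter_parts, sum_const, smul_sum]
  exact sum_comm

theorem SOMEbar_eq_Sobar_sub_Sebar (n : ℕ) : SOMEbar n = Sobar n - Sebar n := by
  simp [SOMEbar, Sobar, Sebar, sum_sub_distrib]

theorem mem_divisors_and_odd_div_iff {a d : ℕ} (hd : 0 < d) :
    d ∈ a.divisors ∧ Odd (a / d) ↔ a % (2 * d) = d := by
  constructor
  · rintro ⟨hmem, hodd⟩
    obtain ⟨q, rfl⟩ := (Nat.mem_divisors.1 hmem).1
    rw [Nat.mul_div_cancel_left q hd, Nat.odd_iff] at hodd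
    rw [mul_comm 2 d, Nat.mul_mod_mul_left, hodd, mul_one]
  · intro h
    have ha : a = d * (2 * (a / (2 * d)) + 1) := by
      have := Nat.div_add_mod a (2 * d)
      rw [h] at this
      linarith
    refine ⟨Nat.mem_divisors.2 ⟨⟨_, ha⟩, by rw [ha]; positivity⟩, ?_⟩
    rw [ha, Nat.mul_div_cancel_left _ hd]
    exact odd_two_mul_add_one _

theorem sum_filter_divisors_odd_div {a N : ℕ} (ha : a ≤ N) (P : ℕ → Prop) [DecidablePred P] :
    ∑ d ∈ a.divisors.filter (fun d => Odd (a / d) ∧ P d), (d : ℤ)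
      = ∑ d ∈ (range (N + 1)).filter P, if a % (2 * d) = d then (d : ℤ) else 0 := by
  have hsub : a.divisors.filter (fun d => Odd (a / d) ∧ P d)
      = (range (N + 1)).filter (fun d => d ∈ a.divisors ∧ Odd (a / d) ∧ P d) := by
    ext d
    simp only [mem_filter, mem_range]
    exact ⟨fun h => ⟨Nat.lt_succ_of_le ((Nat.divisor_le h.1).trans ha), h⟩, And.right⟩
  rw [hsub, sum_filter, sum_filter]
  refine sum_congr rfl fun d _ => ?_
  rcases d.eq_zero_or_pos with rfl | hd
  · simp
  · by_cases hP : P d <;> simp [hP, ← mem_divisors_and_odd_div_iff hd, and_assoc]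

theorem sum_pbar_mul_sum_filter_divisors_odd_div (n : ℕ) (P : ℕ → Prop) [DecidablePred P] :
    ∑ a ∈ range (n + 1), (pbar (n - a) : ℤ) *
        ∑ d ∈ a.divisors.filter (fun d => Odd (a / d) ∧ P d), (d : ℤ)
      = ∑ d ∈ (range (n + 1)).filter P, (d : ℤ) * oddMultipleSum d n := by
  rw [sum_congr rfl fun a ha => by
    rw [sum_filter_divisors_odd_div (Nat.lt_succ_iff.1 (mem_range.1 ha))]]
  simp only [mul_sum]
  rw [sum_comm]
  refine sum_congr rfl fun d _ => ?_
  rw [oddMultipleSum]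
  push_cast
  rw [mul_sum]
  refine sum_congr rfl fun a _ => ?_
  split_ifs <;> ring

theorem stmt_3 : ∀ n : ℕ,
    SOMEbar n = 2 * ∑ k ∈ Finset.range (n + 1), (pbar k : ℤ) * sigmaOE (n - k) := by
  intro n
  have hreflect : ∑ k ∈ range (n + 1), (pbar k : ℤ) * sigmaOE (n - k)
      = ∑ a ∈ range (n + 1), (pbar (n - a) : ℤ) * sigmaOE a := by
    rw [← sum_range_reflect]
    refine sum_congr rfl fun a ha => ?_
    rw [show n - (n + 1 - 1 - a) = a by simp at ha; omega, Nat.add_sub_cancel]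
  rw [SOMEbar_eq_Sobar_sub_Sebar, Sobar, Sebar, sum_overpartitions_sum_filter_parts,
    sum_overpartitions_sum_filter_parts, hreflect]
  simp only [sigmaOE, mul_sub, sum_sub_distrib]
  rw [sum_pbar_mul_sum_filter_divisors_odd_div, sum_pbar_mul_sum_filter_divisors_odd_div]
  simp only [Sbar_eq_two_mul_oddMultipleSum, mul_sum]
  push_cast
  simp only [mul_assoc]
end

section
/- For every n ≥ 1, Σ_{k=0}^{n} p-bar(k) · σ_{o−e}(n−k) ≥ 0. -/
/-- number of overpartitions of `m` with no part equal to `t`. -/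
noncomputable def pbarT (t m : ℕ) : ℕ :=
  ∑ p ∈ Finset.univ.filter (fun p : Nat.Partition m => t ∉ p.parts),
    p.parts.toFinset.powerset.card

lemma fiber_zero (t m : ℕ) :
    ∑ p ∈ Finset.univ.filter (fun p : Nat.Partition m => p.parts.count t = 0),
      p.parts.toFinset.powerset.card = pbarT t m := by
  unfold pbarT
  congr 1
  ext p
  simp [Multiset.count_eq_zero]

lemma fiber_pos (t m i : ℕ) (ht : 0 < t) (hi : 0 < i) (hit : i * t ≤ m) :
    ∑ p ∈ Finset.univ.filter (fun p : Nat.Partition m => p.parts.count t = i),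
      p.parts.toFinset.powerset.card = 2 * pbarT t (m - i * t) := by
  unfold pbarT
  rw [Finset.mul_sum]
  refine Finset.sum_bij'
    (i := fun p (hp : p ∈ _) => (⟨p.parts - Multiset.replicate i t, ?_, ?_⟩ : Nat.Partition (m - i*t)))
    (j := fun q (hq : q ∈ _) => (⟨q.parts + Multiset.replicate i t, ?_, ?_⟩ : Nat.Partition m))
    ?_ ?_ ?_ ?_ ?_
  · -- parts_pos for i-map
    intro a ha
    exact p.parts_pos (Multiset.mem_of_le (Multiset.sub_le_self _ _) ha)
  · -- parts_sum for i-map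
    have hc : p.parts.count t = i := by simpa using hp
    have hle : Multiset.replicate i t ≤ p.parts :=
      Multiset.le_count_iff_replicate_le.mp (le_of_eq hc.symm)
    have h2 : p.parts - Multiset.replicate i t + Multiset.replicate i t = p.parts :=
      tsub_add_cancel_of_le hle
    have h3 := congrArg Multiset.sum h2
    rw [Multiset.sum_add, Multiset.sum_replicate, smul_eq_mul, p.parts_sum] at h3
    omega
  · -- parts_pos for j-map
    intro a ha
    rcases Multiset.mem_add.mp ha with h | h
    · exact q.parts_pos h
    · rw [Multiset.eq_of_mem_replicate h]; exact ht
  · -- parts_sum for j-map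
    rw [Multiset.sum_add, Multiset.sum_replicate, smul_eq_mul, q.parts_sum]
    omega
  · -- i maps into target
    intro p hp
    have hc : p.parts.count t = i := by simpa using hp
    simp only [Finset.mem_filter, Finset.mem_univ, true_and]
    rw [← Multiset.count_eq_zero, Multiset.count_sub, hc, Multiset.count_replicate_self]
    omega
  · -- j maps into source
    intro q hq
    have hc : t ∉ q.parts := by simpa using hq
    simp only [Finset.mem_filter, Finset.mem_univ, true_and]
    rw [Multiset.count_add, Multiset.count_replicate_self, Multiset.count_eq_zero.mpr hc]
    omega
  · -- left inverse
    intro p hp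
    have hc : p.parts.count t = i := by simpa using hp
    have hle : Multiset.replicate i t ≤ p.parts :=
      Multiset.le_count_iff_replicate_le.mp (le_of_eq hc.symm)
    exact Nat.Partition.ext (tsub_add_cancel_of_le hle)
  · -- right inverse
    intro q hq
    exact Nat.Partition.ext (add_tsub_cancel_right _ _)
  · -- values
    intro p hp
    have hc : p.parts.count t = i := by simpa using hp
    have hle : Multiset.replicate i t ≤ p.parts :=
      Multiset.le_count_iff_replicate_le.mp (le_of_eq hc.symm)
    have h2 : p.parts - Multiset.replicate i t + Multiset.replicate i t = p.parts :=
      tsub_add_cancel_of_le hle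
    have hnot : t ∉ (p.parts - Multiset.replicate i t).toFinset := by
      rw [Multiset.mem_toFinset, ← Multiset.count_eq_zero, Multiset.count_sub, hc,
        Multiset.count_replicate_self]
      omega
    have htf : p.parts.toFinset = insert t (p.parts - Multiset.replicate i t).toFinset := by
      conv_lhs => rw [← h2]
      rw [Multiset.toFinset_add, Multiset.toFinset_replicate, if_neg hi.ne',
        Finset.union_comm]
      rfl
    simp only [Finset.card_powerset, htf, Finset.card_insert_of_notMem hnot, pow_succ]
    ring

lemma count_mul_le (m t : ℕ) (p : Nat.Partition m) : p.parts.count t * t ≤ m := by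
  have hle : Multiset.replicate (p.parts.count t) t ≤ p.parts :=
    Multiset.le_count_iff_replicate_le.mp le_rfl
  obtain ⟨u, hu⟩ := Multiset.le_iff_exists_add.mp hle
  have := congrArg Multiset.sum hu
  rw [Multiset.sum_add, Multiset.sum_replicate, smul_eq_mul, p.parts_sum] at this
  omega

lemma key (t m : ℕ) (ht : 0 < t) :
    pbar m = ∑ i ∈ Finset.range (m + 1),
      (if i * t ≤ m then (if i = 0 then 1 else 2) * pbarT t (m - i * t) else 0) := by
  unfold pbar
  rw [← Finset.sum_fiberwise_of_maps_to (g := fun p : Nat.Partition m => p.parts.count t)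
    (t := Finset.range (m + 1)) ?_ (fun p => p.parts.toFinset.powerset.card)]
  · refine Finset.sum_congr rfl (fun i _ => ?_)
    rcases Nat.eq_zero_or_pos i with rfl | hi
    · rw [if_pos (by simp), if_pos rfl, fiber_zero]
      simp
    · by_cases hit : i * t ≤ m
      · rw [if_pos hit, if_neg hi.ne', fiber_pos t m i ht hi hit]
      · rw [if_neg hit]
        rw [Finset.sum_eq_zero]
        intro p hp
        simp only [Finset.mem_filter] at hp
        exact absurd (hp.2 ▸ count_mul_le m t p) hit
  · intro p _
    rw [Finset.mem_range]
    show p.parts.count t < m + 1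
    have h1 := count_mul_le m t p
    have h2 : p.parts.count t ≤ p.parts.count t * t := Nat.le_mul_of_pos_right _ ht
    omega



def eps (b : ℕ) : ℤ := if Odd b then (b : ℤ) else -(b : ℤ)
def wI (j : ℕ) : ℤ := if j = 0 then 1 else 2

lemma twoA (m : ℕ) :
    2 * (∑ b ∈ Finset.Ico 1 (m + 1), eps b) = if Odd m then (m : ℤ) + 1 else -(m : ℤ) := by
  induction m with
  | zero => simp [eps]
  | succ m ih =>
    rw [Finset.sum_Ico_succ_top (by omega), mul_add, ih]
    rcases Nat.even_or_odd m with he | ho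
    · have h1 : ¬ Odd m := (Nat.not_odd_iff_even).mpr he
      have h2 : Odd (m + 1) := Even.add_one he
      simp only [eps, if_neg h1, if_pos h2]
      push_cast
      ring
    · have h2 : ¬ Odd (m + 1) := by simp [Nat.odd_add_one, ho]
      simp only [eps, if_pos ho, if_neg h2]
      push_cast
      ring

lemma coeff (s : ℕ) (hs : 1 ≤ s) :
    ∑ b ∈ Finset.Ico 1 (s + 1), eps b * wI (s - b) = if Odd s then 1 else 0 := by
  rw [Finset.sum_Ico_succ_top (by omega)]
  have h1 : ∀ b ∈ Finset.Ico 1 s, eps b * wI (s - b) = 2 * eps b := by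
    intro b hb
    rw [Finset.mem_Ico] at hb
    rw [wI, if_neg (by omega)]
    ring
  rw [Finset.sum_congr rfl h1, ← Finset.mul_sum]
  have hs1 : s - 1 + 1 = s := by omega
  have := twoA (s - 1)
  rw [hs1] at this
  rw [this, Nat.sub_self]
  rcases Nat.even_or_odd s with he | ho
  · have h1 : ¬ Odd s := (Nat.not_odd_iff_even).mpr he
    have h3 : Odd (s - 1) := by
      rcases he with ⟨k, hk⟩; exact ⟨k - 1, by omega⟩
    simp only [eps, wI, if_pos h3, if_neg h1, reduceIte, mul_one]
    omega
  · have h3 : ¬ Odd (s - 1) := by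
      rintro ⟨k, hk⟩; rcases ho with ⟨j, hj⟩; omega
    simp only [eps, wI, if_neg h3, if_pos ho, reduceIte, mul_one]
    omega

lemma step1 (t n b : ℕ) (ht : 0 < t) (hb : 1 ≤ b) :
    (if b * t ≤ n then eps b * (pbar (n - b * t) : ℤ) else 0)
      = ∑ s ∈ Finset.Ico b (n + 1),
        (if s * t ≤ n then eps b * wI (s - b) * (pbarT t (n - s * t) : ℤ) else 0) := by
  by_cases hbt : b * t ≤ n
  · rw [if_pos hbt, key t (n - b * t) ht]
    push_cast
    rw [Finset.mul_sum]
    -- rewrite each i-term as G (b + i)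
    have hterm : ∀ i,
        eps b * (if i * t ≤ n - b * t then ((if i = 0 then 1 else 2) : ℤ) * (pbarT t (n - b * t - i * t) : ℤ) else 0)
        = (fun s => if s * t ≤ n then eps b * wI (s - b) * (pbarT t (n - s * t) : ℤ) else 0) (b + i) := by
      intro i
      simp only []
      have h1 : (b + i) * t = b * t + i * t := add_mul b i t
      have h2 : (b + i) * t ≤ n ↔ i * t ≤ n - b * t := by omega
      have h3 : n - b * t - i * t = n - (b + i) * t := by omega
      have h4 : b + i - b = i := by omega
      by_cases hc : i * t ≤ n - b * t
      · rw [if_pos hc, if_pos (h2.mpr hc), h3, h4, wI]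
        ring
      · rw [if_neg hc, if_neg (fun h => hc (h2.mp h)), mul_zero]
    rw [Finset.sum_congr rfl (fun i _ => hterm i)]
    have hico := Finset.sum_Ico_eq_sum_range
      (fun s => if s * t ≤ n then eps b * wI (s - b) * (pbarT t (n - s * t) : ℤ) else 0)
      b (b + (n - b * t + 1))
    rw [Nat.add_sub_cancel_left] at hico
    rw [← hico]
    refine Finset.sum_subset ?_ ?_
    · intro s hs
      rw [Finset.mem_Ico] at hs ⊢
      have e5 : b ≤ b * t := Nat.le_mul_of_pos_right _ ht
      omega
    · intro s hs hns
      rw [Finset.mem_Ico] at hs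
      rw [Finset.mem_Ico] at hns
      rw [if_neg]
      intro hstn
      -- s*t ≤ n gives s < b + (n - b*t + 1), contradiction with hns
      have hbs : b ≤ s := hs.1
      have e1 : (s - b) ≤ (s - b) * t := Nat.le_mul_of_pos_right _ ht
      have e2 : (s - b) * t = s * t - b * t := Nat.sub_mul s b t
      have e3 : b * t ≤ s * t := Nat.mul_le_mul_right t hbs
      have e5 : b ≤ b * t := Nat.le_mul_of_pos_right _ ht
      have h5 : b + (n - b * t + 1) ≤ s := by omega
      omega
  · rw [if_neg hbt]
    symm
    apply Finset.sum_eq_zero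
    intro s hs
    rw [Finset.mem_Ico] at hs
    rw [if_neg]
    intro hstn
    have e3 : b * t ≤ s * t := Nat.mul_le_mul_right t hs.1
    omega

lemma main (t n : ℕ) (ht : 0 < t) :
    0 ≤ ∑ b ∈ Finset.Ico 1 (n + 1),
      (if b * t ≤ n then eps b * (pbar (n - b * t) : ℤ) else 0) := by
  rw [Finset.sum_congr rfl (fun b hb => step1 t n b ht (Finset.mem_Ico.mp hb).1)]
  rw [Finset.sum_Ico_Ico_comm 1 (n + 1)
    (fun b s => if s * t ≤ n then eps b * wI (s - b) * (pbarT t (n - s * t) : ℤ) else 0)]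
  apply Finset.sum_nonneg
  intro s hs
  have hs1 : 1 ≤ s := (Finset.mem_Ico.mp hs).1
  by_cases hst : s * t ≤ n
  · simp only [if_pos hst]
    have : ∀ b ∈ Finset.Ico 1 (s + 1),
        eps b * wI (s - b) * (pbarT t (n - s * t) : ℤ)
          = (eps b * wI (s - b)) * (pbarT t (n - s * t) : ℤ) := fun b _ => by ring
    rw [Finset.sum_congr rfl this, ← Finset.sum_mul, coeff s hs1]
    by_cases ho : Odd s
    · rw [if_pos ho, one_mul]
      exact Int.natCast_nonneg _
    · rw [if_neg ho, zero_mul]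
  · simp only [if_neg hst]
    simp

lemma sigma_rw (a : ℕ) :
    sigmaOE a = ∑ d ∈ a.divisors, (if Odd (a / d) then eps d else 0) := by
  unfold sigmaOE
  rw [Finset.sum_filter, Finset.sum_filter, ← Finset.sum_sub_distrib]
  refine Finset.sum_congr rfl (fun d _ => ?_)
  rcases Nat.even_or_odd d with he | ho
  · have h1 : ¬ Odd d := (Nat.not_odd_iff_even).mpr he
    by_cases h2 : Odd (a / d) <;> simp [eps, h1, he, h2]
  · have h1 : ¬ Even d := (Nat.not_even_iff_odd).mpr ho
    by_cases h2 : Odd (a / d) <;> simp [eps, h1, ho, h2]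

lemma sigma_double (a n : ℕ) (ha : a ≤ n) :
    sigmaOE a = ∑ b ∈ Finset.Ico 1 (n + 1), ∑ t ∈ Finset.Ico 1 (n + 1),
      (if b * t = a ∧ Odd t then eps b else 0) := by
  rw [sigma_rw]
  have hinner : ∀ b ∈ Finset.Ico 1 (n + 1),
      ∑ t ∈ Finset.Ico 1 (n + 1), (if b * t = a ∧ Odd t then eps b else 0)
        = (if a / b ∈ Finset.Ico 1 (n + 1) then
            (if b * (a / b) = a ∧ Odd (a / b) then eps b else 0) else 0) := by
    intro b hb
    have hb1 : 1 ≤ b := (Finset.mem_Ico.mp hb).1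
    rw [← Finset.sum_ite_eq' (Finset.Ico 1 (n + 1)) (a / b)
      (fun t => if b * t = a ∧ Odd t then eps b else 0)]
    refine Finset.sum_congr rfl (fun t _ => ?_)
    by_cases h : t = a / b
    · rw [if_pos h]
    · rw [if_neg h, if_neg]
      rintro ⟨h1, -⟩
      exact h (by rw [← h1, Nat.mul_div_cancel_left t hb1])
  have h2 : (∑ b ∈ Finset.Ico 1 (n + 1), ∑ t ∈ Finset.Ico 1 (n + 1),
      (if b * t = a ∧ Odd t then eps b else 0))
      = ∑ b ∈ Finset.Ico 1 (n + 1), (if a / b ∈ Finset.Ico 1 (n + 1) then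
          (if b * (a / b) = a ∧ Odd (a / b) then eps b else 0) else 0) :=
    Finset.sum_congr rfl hinner
  refine Eq.trans ?_ h2.symm
  refine Finset.sum_subset_zero_on_sdiff ?_ ?_ ?_
  · intro d hd
    rw [Nat.mem_divisors] at hd
    rw [Finset.mem_Ico]
    have h1 := Nat.pos_of_mem_divisors (Nat.mem_divisors.mpr hd)
    have h2 := Nat.le_of_dvd (Nat.pos_of_ne_zero hd.2) hd.1
    omega
  · intro b hb
    rw [Finset.mem_sdiff] at hb
    obtain ⟨hb, hbd⟩ := hb
    rw [Nat.mem_divisors] at hbd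
    by_cases hio : a / b ∈ Finset.Ico 1 (n + 1)
    · rw [if_pos hio, if_neg]
      rintro ⟨h1, h2⟩
      rcases Nat.eq_zero_or_pos a with rfl | hapos
      · rw [Nat.zero_div] at h2
        simp at h2
      · exact hbd ⟨Dvd.intro _ h1, hapos.ne'⟩
    · rw [if_neg hio]
  · intro d hd
    rw [Nat.mem_divisors] at hd
    have hapos : 0 < a := Nat.pos_of_ne_zero hd.2
    have hdpos : 0 < d := Nat.pos_of_mem_divisors (Nat.mem_divisors.mpr hd)
    have h1 : 1 ≤ a / d := Nat.div_pos (Nat.le_of_dvd hapos hd.1) hdpos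
    have h2 : a / d ≤ n := le_trans (Nat.div_le_self a d) ha
    rw [if_pos (Finset.mem_Ico.mpr ⟨h1, by omega⟩)]
    rw [Nat.mul_div_cancel' hd.1]
    simp

theorem stmt_4 : ∀ n : ℕ, 1 ≤ n →
    0 ≤ ∑ k ∈ Finset.range (n + 1), (pbar k : ℤ) * sigmaOE (n - k) := by
  intro n _
  have hrefl : ∑ k ∈ Finset.range (n + 1), (pbar k : ℤ) * sigmaOE (n - k)
      = ∑ a ∈ Finset.range (n + 1), (pbar (n - a) : ℤ) * sigmaOE a := by
    rw [← Finset.sum_range_reflect (fun a => (pbar (n - a) : ℤ) * sigmaOE a) (n + 1)]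
    refine Finset.sum_congr rfl (fun k hk => ?_)
    rw [Finset.mem_range] at hk
    have h1 : n + 1 - 1 - k = n - k := by omega
    have h2 : n - (n - k) = k := by omega
    rw [h1, h2]
  rw [hrefl]
  have hexp : ∀ a ∈ Finset.range (n + 1),
      (pbar (n - a) : ℤ) * sigmaOE a
        = ∑ b ∈ Finset.Ico 1 (n + 1), ∑ t ∈ Finset.Ico 1 (n + 1),
            (pbar (n - a) : ℤ) * (if b * t = a ∧ Odd t then eps b else 0) := by
    intro a ha
    rw [Finset.mem_range] at ha
    rw [sigma_double a n (by omega), Finset.mul_sum]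
    exact Finset.sum_congr rfl (fun b _ => Finset.mul_sum _ _ _)
  rw [Finset.sum_congr rfl hexp]
  rw [Finset.sum_comm]
  have hswap : ∀ b ∈ Finset.Ico 1 (n + 1),
      ∑ a ∈ Finset.range (n + 1), ∑ t ∈ Finset.Ico 1 (n + 1),
          (pbar (n - a) : ℤ) * (if b * t = a ∧ Odd t then eps b else 0)
        = ∑ t ∈ Finset.Ico 1 (n + 1), ∑ a ∈ Finset.range (n + 1),
          (pbar (n - a) : ℤ) * (if b * t = a ∧ Odd t then eps b else 0) :=
    fun b _ => Finset.sum_comm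
  rw [Finset.sum_congr rfl hswap, Finset.sum_comm]
  apply Finset.sum_nonneg
  intro t htmem
  have ht1 : 1 ≤ t := (Finset.mem_Ico.mp htmem).1
  have hcollapse : ∀ b ∈ Finset.Ico 1 (n + 1),
      ∑ a ∈ Finset.range (n + 1),
          (pbar (n - a) : ℤ) * (if b * t = a ∧ Odd t then eps b else 0)
        = (if b * t ≤ n then
            (if Odd t then (pbar (n - b * t) : ℤ) * eps b else 0) else 0) := by
    intro b _
    have hpt : ∀ a ∈ Finset.range (n + 1),
        (pbar (n - a) : ℤ) * (if b * t = a ∧ Odd t then eps b else 0)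
          = (if a = b * t then
              (pbar (n - a) : ℤ) * (if b * t = a ∧ Odd t then eps b else 0) else 0) := by
      intro a _
      by_cases h : a = b * t
      · rw [if_pos h]
      · rw [if_neg h, if_neg, mul_zero]
        rintro ⟨h1, -⟩
        exact h h1.symm
    rw [Finset.sum_congr rfl hpt, Finset.sum_ite_eq' (Finset.range (n + 1)) (b * t)]
    simp only [Finset.mem_range]
    by_cases hbt : b * t ≤ n
    · rw [if_pos (by omega), if_pos hbt]
      by_cases ho : Odd t
      · simp [ho]
      · simp [ho]
    · rw [if_neg (by omega), if_neg hbt]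
  rw [Finset.sum_congr rfl hcollapse]
  by_cases ho : Odd t
  · have heq : ∀ b ∈ Finset.Ico 1 (n + 1),
        (if b * t ≤ n then (if Odd t then (pbar (n - b * t) : ℤ) * eps b else 0) else 0)
          = (if b * t ≤ n then eps b * (pbar (n - b * t) : ℤ) else 0) := by
      intro b _
      by_cases hbt : b * t ≤ n
      · rw [if_pos hbt, if_pos hbt, if_pos ho, mul_comm]
      · rw [if_neg hbt, if_neg hbt]
    rw [Finset.sum_congr rfl heq]
    exact main t n ht1
  · apply Finset.sum_nonneg
    intro b _
    by_cases hbt : b * t ≤ n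
    · rw [if_pos hbt, if_neg ho]
    · rw [if_neg hbt]
end

section
/- For every n ≥ 1 and b ≥ 1, S-bar_b(n) = 2b · Σ_{k=0}^{⌊(n−b)/(2b)⌋} p-bar(n − (2k+1)b), where S-bar_b(n) is the total number of times b appears as a part, counted with multiplicity, across all overpartitions of n, multiplied by b (i.e., the sum of all parts equal to b in all overpartitions of n). -/
open Finset


/-- Key bijection: summing `g parts` over partitions of `n` containing at least `c`
copies of `b` equals summing over partitions of `n - c*b` with `c` copies of `b` added. -/
lemma sum_part_bij (b c n : ℕ) (hb : 0 < b) (hcb : c * b ≤ n) (g : Multiset ℕ → ℕ) :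
    (∑ p : Nat.Partition n, if c ≤ p.parts.count b then g p.parts else 0)
      = ∑ q : Nat.Partition (n - c * b), g (q.parts + Multiset.replicate c b) := by
  rw [← Finset.sum_filter]
  refine Finset.sum_bij' (fun p hp => ?_) (fun q hq => ?_) ?_ ?_ ?_ ?_ ?_
  · -- i
    refine ⟨p.parts - Multiset.replicate c b, ?_, ?_⟩
    · intro i hi
      exact p.parts_pos (Multiset.mem_of_le (Multiset.sub_le_self _ _) hi)
    · simp only [Finset.mem_filter] at hp
      have hle : Multiset.replicate c b ≤ p.parts :=
        Multiset.le_count_iff_replicate_le.mp hp.2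
      have h1 : (p.parts - Multiset.replicate c b) + Multiset.replicate c b = p.parts :=
        tsub_add_cancel_of_le hle
      have h2 := congrArg Multiset.sum h1
      rw [Multiset.sum_add, Multiset.sum_replicate, smul_eq_mul, p.parts_sum] at h2
      omega
  · -- j
    refine ⟨q.parts + Multiset.replicate c b, ?_, ?_⟩
    · intro i hi
      rcases Multiset.mem_add.mp hi with h | h
      · exact q.parts_pos h
      · rw [Multiset.eq_of_mem_replicate h]; exact hb
    · rw [Multiset.sum_add, Multiset.sum_replicate, smul_eq_mul, q.parts_sum]
      omega
  · intro p hp; exact Finset.mem_univ _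
  · intro q hq
    simp only [Finset.mem_filter, Finset.mem_univ, true_and]
    simp [Multiset.count_replicate]
  · intro p hp
    simp only [Finset.mem_filter] at hp
    have hle : Multiset.replicate c b ≤ p.parts :=
      Multiset.le_count_iff_replicate_le.mp hp.2
    exact Nat.Partition.ext (tsub_add_cancel_of_le hle)
  · intro q hq
    exact Nat.Partition.ext (by simp)
  · intro p hp
    simp only [Finset.mem_filter] at hp
    have hle : Multiset.replicate c b ≤ p.parts :=
      Multiset.le_count_iff_replicate_le.mp hp.2
    rw [tsub_add_cancel_of_le hle]

/-- weighted count of partitions of `m`, with `b` force-inserted into the distinct parts. -/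
noncomputable def fA (b m : ℕ) : ℕ :=
  ∑ q : Nat.Partition m, 2 ^ (insert b q.parts.toFinset).card

lemma pbar_eq (m : ℕ) : pbar m = ∑ q : Nat.Partition m, 2 ^ q.parts.toFinset.card := by
  unfold pbar; simp [Finset.card_powerset]

lemma mem_parts_le {m : ℕ} (q : Nat.Partition m) {x : ℕ} (hx : x ∈ q.parts) : x ≤ m := by
  have := Multiset.single_le_sum (fun y _ => Nat.zero_le y) x hx
  rwa [q.parts_sum] at this

/-- the bijection specialized to `g = 2 ^ toFinset.card`. -/
lemma key_s5 (b c n : ℕ) (hb : 0 < b) (hc : 0 < c) (hcb : c * b ≤ n) :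
    (∑ p : Nat.Partition n, if c ≤ p.parts.count b then 2 ^ p.parts.toFinset.card else 0)
      = fA b (n - c * b) := by
  rw [sum_part_bij b c n hb hcb (fun s => 2 ^ s.toFinset.card)]
  unfold fA
  refine Finset.sum_congr rfl fun q _ => ?_
  congr 1
  rw [Multiset.toFinset_add]
  have : (Multiset.replicate c b).toFinset = {b} := by
    rw [Multiset.toFinset_replicate]
    simp [hc.ne']
  rw [this, Finset.union_comm, ← Finset.insert_eq]

lemma fA_small (b m : ℕ) (h : m < b) : fA b m = 2 * pbar m := by
  rw [pbar_eq, Finset.mul_sum]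
  refine Finset.sum_congr rfl fun q _ => ?_
  have hb : b ∉ q.parts.toFinset := by
    simp only [Multiset.mem_toFinset]
    intro hmem
    exact absurd (mem_parts_le q hmem) (by omega)
  rw [Finset.card_insert_of_notMem hb, pow_succ, mul_comm]

lemma fA_rec (b m : ℕ) (hb : 0 < b) (h : b ≤ m) :
    fA b m + fA b (m - b) = 2 * pbar m := by
  have hk := key_s5 b 1 m hb one_pos (by omega)
  rw [one_mul] at hk
  rw [← hk]
  unfold fA
  rw [pbar_eq, Finset.mul_sum, ← Finset.sum_add_distrib]
  refine Finset.sum_congr rfl fun q _ => ?_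
  by_cases hbq : b ∈ q.parts
  · rw [if_pos (by simpa [Multiset.one_le_count_iff_mem] using hbq)]
    rw [Finset.insert_eq_self.mpr (by simpa using hbq)]
    ring
  · rw [if_neg (by simpa [Multiset.one_le_count_iff_mem] using hbq)]
    rw [Finset.card_insert_of_notMem (by simpa using hbq), pow_succ]
    ring

/-- main induction -/
lemma main_ind (b : ℕ) (hb : 0 < b) : ∀ n : ℕ,
    (∑ j ∈ Finset.range (n + 1), if (j + 1) * b ≤ n then fA b (n - (j + 1) * b) else 0)
      = 2 * ∑ k ∈ Finset.range (n + 1), if (2 * k + 1) * b ≤ n then pbar (n - (2 * k + 1) * b) else 0 := by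
  intro n
  induction n using Nat.strong_induction_on with
  | _ n ih =>
  rcases lt_or_ge n b with hn | hn
  · rw [Finset.sum_eq_zero, Finset.sum_eq_zero]
    · simp
    · intro k _; rw [if_neg]; nlinarith
    · intro j _; rw [if_neg]; nlinarith
  rcases lt_or_ge n (2 * b) with hn2 | hn2
  · -- b ≤ n < 2b
    have hL : (∑ j ∈ Finset.range (n + 1), if (j + 1) * b ≤ n then fA b (n - (j + 1) * b) else 0)
        = fA b (n - b) := by
      rw [Finset.sum_range_succ' (fun j => if (j + 1) * b ≤ n then fA b (n - (j + 1) * b) else 0)]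
      rw [Finset.sum_eq_zero, zero_add, if_pos (by omega),
        show (0 + 1) * b = b from by ring]
      intro j _
      rw [if_neg]
      nlinarith
    have hR : (∑ k ∈ Finset.range (n + 1), if (2 * k + 1) * b ≤ n then pbar (n - (2 * k + 1) * b) else 0)
        = pbar (n - b) := by
      rw [Finset.sum_range_succ' (fun k => if (2 * k + 1) * b ≤ n then pbar (n - (2 * k + 1) * b) else 0)]
      rw [Finset.sum_eq_zero, zero_add, if_pos (by omega),
        show (2 * 0 + 1) * b = b from by ring]
      intro k _
      rw [if_neg]
      nlinarith
    rw [hL, hR, fA_small b (n - b) (by omega)]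
  · -- n ≥ 2b
    have hm : n - 2 * b < n := by omega
    have IH := ih (n - 2 * b) hm
    -- LHS
    have hL : (∑ j ∈ Finset.range (n + 1), if (j + 1) * b ≤ n then fA b (n - (j + 1) * b) else 0)
        = fA b (n - b) + fA b (n - 2 * b)
          + ∑ j ∈ Finset.range (n - 2 * b + 1),
              if (j + 1) * b ≤ n - 2 * b then fA b (n - 2 * b - (j + 1) * b) else 0 := by
      obtain ⟨m, rfl⟩ : ∃ m, n = m + 2 := ⟨n - 2, by omega⟩
      rw [Finset.sum_range_succ' (fun j => if (j + 1) * b ≤ m + 2 then fA b (m + 2 - (j + 1) * b) else 0)]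
      rw [Finset.sum_range_succ' (fun j => if (j + 1 + 1) * b ≤ m + 2 then fA b (m + 2 - (j + 1 + 1) * b) else 0)]
      rw [show (0 + 1) * b = b from by ring, show (0 + 1 + 1) * b = 2 * b from by ring,
        if_pos (show b ≤ m + 2 by omega), if_pos (show 2 * b ≤ m + 2 by omega)]
      have hterm : ∀ j, (if (j + 1 + 1 + 1) * b ≤ m + 2 then fA b (m + 2 - (j + 1 + 1 + 1) * b) else 0)
          = (if (j + 1) * b ≤ m + 2 - 2 * b then fA b (m + 2 - 2 * b - (j + 1) * b) else 0) := by
        intro j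
        have he : (j + 1 + 1 + 1) * b = (j + 1) * b + 2 * b := by ring
        rw [he]
        by_cases hcond : (j + 1) * b + 2 * b ≤ m + 2
        · rw [if_pos hcond, if_pos (by omega)]
          congr 1
          omega
        · rw [if_neg hcond, if_neg (by omega)]
      simp only [hterm]
      have hsub : ∑ j ∈ Finset.range (m + 1),
            (if (j + 1) * b ≤ m + 2 - 2 * b then fA b (m + 2 - 2 * b - (j + 1) * b) else 0)
          = ∑ j ∈ Finset.range (m + 2 - 2 * b + 1),
            (if (j + 1) * b ≤ m + 2 - 2 * b then fA b (m + 2 - 2 * b - (j + 1) * b) else 0) := by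
        rw [← Finset.sum_subset (Finset.range_subset_range.mpr (by omega : m + 2 - 2 * b + 1 ≤ m + 1))]
        intro j hj hj2
        simp only [Finset.mem_range] at hj hj2
        rw [if_neg]
        have : j + 1 ≤ (j + 1) * b := Nat.le_mul_of_pos_right _ hb
        omega
      rw [hsub]
      ring
    -- RHS
    have hR : (∑ k ∈ Finset.range (n + 1), if (2 * k + 1) * b ≤ n then pbar (n - (2 * k + 1) * b) else 0)
        = pbar (n - b)
          + ∑ k ∈ Finset.range (n - 2 * b + 1),
              if (2 * k + 1) * b ≤ n - 2 * b then pbar (n - 2 * b - (2 * k + 1) * b) else 0 := by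
      rw [Finset.sum_range_succ' (fun k => if (2 * k + 1) * b ≤ n then pbar (n - (2 * k + 1) * b) else 0)]
      rw [show (2 * 0 + 1) * b = b from by ring, if_pos (show b ≤ n by omega)]
      have hterm : ∀ k, (if (2 * (k + 1) + 1) * b ≤ n then pbar (n - (2 * (k + 1) + 1) * b) else 0)
          = (if (2 * k + 1) * b ≤ n - 2 * b then pbar (n - 2 * b - (2 * k + 1) * b) else 0) := by
        intro k
        have he : (2 * (k + 1) + 1) * b = (2 * k + 1) * b + 2 * b := by ring
        rw [he]
        by_cases hcond : (2 * k + 1) * b + 2 * b ≤ n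
        · rw [if_pos hcond, if_pos (by omega)]
          congr 1
          omega
        · rw [if_neg hcond, if_neg (by omega)]
      simp only [hterm]
      have hsub : ∑ k ∈ Finset.range n,
            (if (2 * k + 1) * b ≤ n - 2 * b then pbar (n - 2 * b - (2 * k + 1) * b) else 0)
          = ∑ k ∈ Finset.range (n - 2 * b + 1),
            (if (2 * k + 1) * b ≤ n - 2 * b then pbar (n - 2 * b - (2 * k + 1) * b) else 0) := by
        rw [← Finset.sum_subset (Finset.range_subset_range.mpr (by omega : n - 2 * b + 1 ≤ n))]
        intro k hk hk2
        simp only [Finset.mem_range] at hk hk2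
        rw [if_neg]
        have : 2 * k + 1 ≤ (2 * k + 1) * b := Nat.le_mul_of_pos_right _ hb
        omega
      rw [hsub]
      ring
    rw [hL, hR, IH]
    have hrec : fA b (n - b) + fA b (n - 2 * b) = 2 * pbar (n - b) := by
      have := fA_rec b (n - b) hb (by omega)
      have he : n - b - b = n - 2 * b := by omega
      rwa [he] at this
    rw [hrec]
    ring

theorem stmt_5 : ∀ n b : ℕ, 1 ≤ n → 1 ≤ b →
    Sbar b n = 2 * b * ∑ k ∈ (Finset.range (n + 1)).filter (fun k => (2 * k + 1) * b ≤ n),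
      pbar (n - (2 * k + 1) * b) := by
  intro n b hn hb
  have hb' : 0 < b := hb
  have hcount : ∀ p : Nat.Partition n, p.parts.count b * b ≤ n := by
    intro p
    have hle : Multiset.replicate (p.parts.count b) b ≤ p.parts :=
      Multiset.le_count_iff_replicate_le.mp le_rfl
    obtain ⟨u, hu⟩ := Multiset.le_iff_exists_add.mp hle
    have hs := p.parts_sum
    rw [hu, Multiset.sum_add, Multiset.sum_replicate, smul_eq_mul] at hs
    omega
  have hS : Sbar b n = b * ∑ p : Nat.Partition n, p.parts.count b * 2 ^ p.parts.toFinset.card := by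
    unfold Sbar
    rw [Finset.mul_sum]
    refine Finset.sum_congr rfl fun p _ => ?_
    rw [Finset.sum_const, Finset.card_powerset, smul_eq_mul]
    ring
  have hexp : ∀ c X : ℕ, c ≤ n →
      (∑ j ∈ Finset.range (n + 1), if j + 1 ≤ c then X else 0) = c * X := by
    intro c X hc
    rw [← Finset.sum_filter]
    have hfil : (Finset.range (n + 1)).filter (fun j => j + 1 ≤ c) = Finset.range c := by
      ext j
      simp only [Finset.mem_filter, Finset.mem_range]
      omega
    rw [hfil, Finset.sum_const, Finset.card_range, smul_eq_mul]
  have hmid : (∑ p : Nat.Partition n, p.parts.count b * 2 ^ p.parts.toFinset.card)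
      = ∑ j ∈ Finset.range (n + 1), if (j + 1) * b ≤ n then fA b (n - (j + 1) * b) else 0 := by
    have h1 : (∑ p : Nat.Partition n, p.parts.count b * 2 ^ p.parts.toFinset.card)
        = ∑ p : Nat.Partition n, ∑ j ∈ Finset.range (n + 1),
            if j + 1 ≤ p.parts.count b then 2 ^ p.parts.toFinset.card else 0 := by
      refine Finset.sum_congr rfl fun p _ => ?_
      have hc : p.parts.count b ≤ n := le_trans (Nat.le_mul_of_pos_right _ hb') (hcount p)
      rw [hexp _ _ hc]
    rw [h1, Finset.sum_comm]
    refine Finset.sum_congr rfl fun j _ => ?_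
    by_cases hj : (j + 1) * b ≤ n
    · rw [if_pos hj, key_s5 b (j + 1) n hb' (Nat.succ_pos j) hj]
    · rw [if_neg hj, Finset.sum_eq_zero]
      intro p _
      rw [if_neg]
      intro hcon
      exact hj (le_trans (Nat.mul_le_mul_right b hcon) (hcount p))
  rw [hS, hmid, main_ind b hb' n, Finset.sum_filter]
  ring
end

section
/- For every n ≥ 1 and b ≥ 1, the sum of all parts equal to b appearing in all overpartitions of n is divisible by 2b. -/
theorem stmt_6 : ∀ n b : ℕ, 1 ≤ n → 1 ≤ b → 2 * b ∣ Sbar b n := by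
  intro n b _ _
  unfold Sbar
  apply Finset.dvd_sum
  intro p _
  rw [Finset.sum_const, smul_eq_mul]
  rcases Nat.eq_zero_or_pos (p.parts.count b) with h | h
  · simp [h]
  · have hb : b ∈ p.parts.toFinset := by
      rw [Multiset.mem_toFinset]
      exact Multiset.count_pos.mp h
    have h2 : 2 ∣ p.parts.toFinset.powerset.card := by
      rw [Finset.card_powerset]
      have : 1 ≤ p.parts.toFinset.card := Finset.card_pos.mpr ⟨b, hb⟩
      exact dvd_pow_self 2 (Nat.one_le_iff_ne_zero.mp this)
    exact mul_dvd_mul h2 (Dvd.intro_left _ rfl)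
end

section
/- For every n ≥ 0, SOME-bar(4n+3) ≡ 0 (mod 8). -/
namespace Stmt7Aux

variable {n : ℕ}

/-- the weight of a partition: sum of odd parts minus sum of even parts. -/
def wgt (p : Nat.Partition n) : ℤ :=
  ((p.parts.filter (fun x => Odd x)).sum : ℤ) - ((p.parts.filter (fun x => Even x)).sum : ℤ)

lemma somebar_eq (n : ℕ) :
    SOMEbar n = ∑ p : Nat.Partition n, (2 ^ p.parts.toFinset.card : ℤ) * wgt p := by
  unfold SOMEbar wgt
  refine Finset.sum_congr rfl fun p _ => ?_
  rw [Finset.sum_const, Finset.card_powerset, nsmul_eq_mul]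
  push_cast
  ring

lemma filter_sum_add (p : Nat.Partition n) :
    (p.parts.filter (fun x => Odd x)).sum + (p.parts.filter (fun x => Even x)).sum = n := by
  have h := Multiset.sum_filter_add_sum_filter_not (s := p.parts) (fun x => Odd x)
  rw [p.parts_sum] at h
  have e : Multiset.filter (fun a => ¬Odd a) p.parts = Multiset.filter (fun x => Even x) p.parts :=
    Multiset.filter_congr (fun x _ => Nat.not_odd_iff_even)
  rw [e] at h
  exact h

lemma wgt_eq (p : Nat.Partition n) :
    wgt p = 2 * ((p.parts.filter (fun x => Odd x)).sum : ℤ) - n := by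
  have h := filter_sum_add p
  unfold wgt
  have h' : ((p.parts.filter (fun x => Odd x)).sum : ℤ)
      + ((p.parts.filter (fun x => Even x)).sum : ℤ) = n := by exact_mod_cast h
  linarith

lemma exists_replicate_of_card_one (p : Nat.Partition n)
    (h : p.parts.toFinset.card = 1) :
    ∃ b m, 0 < b ∧ 0 < m ∧ p.parts = Multiset.replicate m b ∧ m * b = n := by
  obtain ⟨b, hb⟩ := Finset.card_eq_one.mp h
  have hrep := Multiset.toFinset_sum_count_nsmul_eq p.parts
  rw [hb, Finset.sum_singleton, Multiset.nsmul_singleton] at hrep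
  have hbmem : b ∈ p.parts := by
    have : b ∈ p.parts.toFinset := by rw [hb]; exact Finset.mem_singleton_self b
    exact Multiset.mem_toFinset.mp this
  refine ⟨b, p.parts.count b, p.parts_pos hbmem, Multiset.count_pos.mpr hbmem, hrep.symm, ?_⟩
  have := p.parts_sum
  rw [← hrep, Multiset.sum_replicate, smul_eq_mul] at this
  exact this

lemma exists_two_of_card_two (p : Nat.Partition n)
    (h : p.parts.toFinset.card = 2) :
    ∃ b₁ m₁ b₂ m₂, b₁ < b₂ ∧ 0 < b₁ ∧ 0 < m₁ ∧ 0 < m₂ ∧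
      p.parts = Multiset.replicate m₁ b₁ + Multiset.replicate m₂ b₂ ∧ m₁ * b₁ + m₂ * b₂ = n := by
  obtain ⟨x, y, hxy, hb⟩ := Finset.card_eq_two.mp h
  -- wlog x < y
  obtain ⟨b₁, b₂, hlt, hb'⟩ : ∃ b₁ b₂, b₁ < b₂ ∧ p.parts.toFinset = {b₁, b₂} := by
    rcases lt_or_gt_of_ne hxy with h' | h'
    · exact ⟨x, y, h', hb⟩
    · exact ⟨y, x, h', by rw [hb, Finset.pair_comm]⟩
  have hne : b₁ ≠ b₂ := ne_of_lt hlt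
  have hrep := Multiset.toFinset_sum_count_nsmul_eq p.parts
  rw [hb'] at hrep
  rw [Finset.sum_insert (by simp [hne]), Finset.sum_singleton,
    Multiset.nsmul_singleton, Multiset.nsmul_singleton] at hrep
  have h1mem : b₁ ∈ p.parts := by
    have : b₁ ∈ p.parts.toFinset := by rw [hb']; simp
    exact Multiset.mem_toFinset.mp this
  have h2mem : b₂ ∈ p.parts := by
    have : b₂ ∈ p.parts.toFinset := by rw [hb']; simp
    exact Multiset.mem_toFinset.mp this
  refine ⟨b₁, p.parts.count b₁, b₂, p.parts.count b₂, hlt, p.parts_pos h1mem,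
    Multiset.count_pos.mpr h1mem, Multiset.count_pos.mpr h2mem, hrep.symm, ?_⟩
  have := p.parts_sum
  rw [← hrep, Multiset.sum_add, Multiset.sum_replicate, Multiset.sum_replicate,
    smul_eq_mul, smul_eq_mul] at this
  exact this

lemma wgt_of_card_one (hn : n % 2 = 1) (p : Nat.Partition n)
    (h : p.parts.toFinset.card = 1) : wgt p = n := by
  obtain ⟨b, m, hb, hm, hrep, hmb⟩ := exists_replicate_of_card_one p h
  have hodd : Odd b := by
    have : Odd (m * b) := by rw [hmb]; exact Nat.odd_iff.mpr hn
    exact (Nat.odd_mul.mp this).2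
  unfold wgt
  rw [hrep]
  rw [Multiset.filter_eq_self.mpr (fun a ha => by
    rw [Multiset.eq_of_mem_replicate ha]; exact hodd)]
  rw [Multiset.filter_eq_nil.mpr (fun a ha => by
    rw [Multiset.eq_of_mem_replicate ha]; exact (Nat.not_even_iff_odd.mpr hodd))]
  rw [Multiset.sum_replicate, smul_eq_mul, hmb]
  simp


lemma parts_card_pos (hpos : 0 < n) (p : Nat.Partition n) : 0 < p.parts.toFinset.card := by
  rcases Multiset.empty_or_exists_mem p.parts with h | ⟨a, ha⟩
  · exfalso
    have := p.parts_sum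
    rw [h] at this
    simp at this
    omega
  · exact Finset.card_pos.mpr ⟨a, Multiset.mem_toFinset.mpr ha⟩

lemma somebar_zmod (n : ℕ) (hn : n % 2 = 1) :
    ((SOMEbar n : ℤ) : ZMod 8) =
      ((Finset.univ.filter fun p : Nat.Partition n => p.parts.toFinset.card = 1).card : ZMod 8)
        * (2 * (n : ZMod 8))
      + ((Finset.univ.filter fun p : Nat.Partition n => p.parts.toFinset.card = 2).card : ZMod 8)
        * 4 := by
  have hpos : 0 < n := by omega
  obtain ⟨j, hj⟩ : ∃ j, n = 2 * j + 1 := ⟨n / 2, by omega⟩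
  have h8 : (8 : ZMod 8) = 0 := by decide
  rw [somebar_eq]
  push_cast
  rw [← Finset.sum_filter_add_sum_filter_not Finset.univ
    (fun p : Nat.Partition n => p.parts.toFinset.card = 1)
    (fun p => (2 : ZMod 8) ^ p.parts.toFinset.card * ((wgt p : ℤ) : ZMod 8))]
  rw [← Finset.sum_filter_add_sum_filter_not
    (Finset.univ.filter fun p : Nat.Partition n => ¬ p.parts.toFinset.card = 1)
    (fun p : Nat.Partition n => p.parts.toFinset.card = 2)
    (fun p => (2 : ZMod 8) ^ p.parts.toFinset.card * ((wgt p : ℤ) : ZMod 8))]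
  have e1 : ∑ p ∈ (Finset.univ.filter fun p : Nat.Partition n => p.parts.toFinset.card = 1),
      (2 : ZMod 8) ^ p.parts.toFinset.card * ((wgt p : ℤ) : ZMod 8)
      = ((Finset.univ.filter fun p : Nat.Partition n => p.parts.toFinset.card = 1).card : ZMod 8)
        * (2 * (n : ZMod 8)) := by
    rw [Finset.sum_congr rfl (fun p hp => ?_), Finset.sum_const, nsmul_eq_mul]
    have hc : p.parts.toFinset.card = 1 := (Finset.mem_filter.mp hp).2
    rw [hc, wgt_of_card_one hn p hc]
    push_cast
    ring
  have e2 : ∑ p ∈ ((Finset.univ.filter fun p : Nat.Partition n => ¬ p.parts.toFinset.card = 1).filter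
      fun p : Nat.Partition n => p.parts.toFinset.card = 2),
      (2 : ZMod 8) ^ p.parts.toFinset.card * ((wgt p : ℤ) : ZMod 8)
      = ((Finset.univ.filter fun p : Nat.Partition n => p.parts.toFinset.card = 2).card : ZMod 8)
        * 4 := by
    have hset : ((Finset.univ.filter fun p : Nat.Partition n => ¬ p.parts.toFinset.card = 1).filter
        fun p : Nat.Partition n => p.parts.toFinset.card = 2)
        = (Finset.univ.filter fun p : Nat.Partition n => p.parts.toFinset.card = 2) := by
      rw [Finset.filter_filter]
      exact Finset.filter_congr (fun p _ => Iff.intro (fun h => h.2) (fun h => ⟨by omega, h⟩))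
    rw [hset, Finset.sum_congr rfl (fun p hp => ?_), Finset.sum_const, nsmul_eq_mul]
    have hc : p.parts.toFinset.card = 2 := (Finset.mem_filter.mp hp).2
    have hw := wgt_eq p
    set Onat := (p.parts.filter (fun x => Odd x)).sum with hO
    have hw8 : ((wgt p : ℤ) : ZMod 8) = 2 * (Onat : ZMod 8) - (n : ZMod 8) := by
      rw [hw]; push_cast; ring
    have hn8 : (n : ZMod 8) = 2 * (j : ZMod 8) + 1 := by
      exact_mod_cast congrArg (Nat.cast (R := ZMod 8)) hj
    rw [hc, hw8, hn8]
    linear_combination ((Onat : ZMod 8) - (j : ZMod 8) - 1) * h8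
  have e3 : ∑ p ∈ ((Finset.univ.filter fun p : Nat.Partition n => ¬ p.parts.toFinset.card = 1).filter
      fun p : Nat.Partition n => ¬ p.parts.toFinset.card = 2),
      (2 : ZMod 8) ^ p.parts.toFinset.card * ((wgt p : ℤ) : ZMod 8) = 0 := by
    refine Finset.sum_eq_zero (fun p hp => ?_)
    have h1 := (Finset.mem_filter.mp (Finset.mem_filter.mp hp).1).2
    have h2 := (Finset.mem_filter.mp hp).2
    have h0 := parts_card_pos hpos p
    obtain ⟨k, hk⟩ : ∃ k, p.parts.toFinset.card = 3 + k := ⟨p.parts.toFinset.card - 3, by omega⟩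
    rw [hk, pow_add]
    have : (2 : ZMod 8) ^ 3 = 0 := by decide
    rw [this, zero_mul, zero_mul]
  rw [e1, e2, e3]
  ring


/-! ### The quadruple finset -/

/-- quadruples `(b₁,m₁,b₂,m₂)` of positive naturals with `b₁m₁ + b₂m₂ = n`. -/
def QF (n : ℕ) : Finset (ℕ × ℕ × ℕ × ℕ) :=
  (Finset.Icc 1 n ×ˢ Finset.Icc 1 n ×ˢ Finset.Icc 1 n ×ˢ Finset.Icc 1 n).filter
    (fun x => x.1 * x.2.1 + x.2.2.1 * x.2.2.2 = n)

lemma mem_QF {n : ℕ} {x : ℕ × ℕ × ℕ × ℕ} :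
    x ∈ QF n ↔ 0 < x.1 ∧ 0 < x.2.1 ∧ 0 < x.2.2.1 ∧ 0 < x.2.2.2 ∧
      x.1 * x.2.1 + x.2.2.1 * x.2.2.2 = n := by
  unfold QF
  simp only [Finset.mem_filter, Finset.mem_product, Finset.mem_Icc]
  constructor
  · rintro ⟨⟨⟨h1a, h1b⟩, ⟨h2a, h2b⟩, ⟨h3a, h3b⟩, h4a, h4b⟩, h5⟩
    exact ⟨h1a, h2a, h3a, h4a, h5⟩
  · rintro ⟨h1, h2, h3, h4, h5⟩
    have k1 : x.1 ≤ x.1 * x.2.1 := Nat.le_mul_of_pos_right _ h2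
    have k2 : x.2.1 ≤ x.1 * x.2.1 := Nat.le_mul_of_pos_left _ h1
    have k3 : x.2.2.1 ≤ x.2.2.1 * x.2.2.2 := Nat.le_mul_of_pos_right _ h4
    have k4 : x.2.2.2 ≤ x.2.2.1 * x.2.2.2 := Nat.le_mul_of_pos_left _ h3
    set u := x.1 * x.2.1 with hu
    set v := x.2.2.1 * x.2.2.2 with hv
    exact ⟨⟨⟨h1, by omega⟩, ⟨h2, by omega⟩, ⟨h3, by omega⟩, ⟨h4, by omega⟩⟩, h5⟩

lemma qf_swap_mem {n : ℕ} {x : ℕ × ℕ × ℕ × ℕ} (hx : x ∈ QF n) :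
    (x.2.2.1, x.2.2.2, x.1, x.2.1) ∈ QF n := by
  rw [mem_QF] at hx ⊢
  obtain ⟨h1, h2, h3, h4, h5⟩ := hx
  exact ⟨h3, h4, h1, h2, by rw [Nat.add_comm]; exact h5⟩

/-- swapping the two halves is a card bijection between two symmetric filters. -/
lemma card_swap_filter {n : ℕ} (P : ℕ × ℕ × ℕ × ℕ → Prop) [DecidablePred P]
    (Q : ℕ × ℕ × ℕ × ℕ → Prop) [DecidablePred Q]
    (hPQ : ∀ x, P x → Q (x.2.2.1, x.2.2.2, x.1, x.2.1))
    (hQP : ∀ x, Q x → P (x.2.2.1, x.2.2.2, x.1, x.2.1)) :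
    ((QF n).filter P).card = ((QF n).filter Q).card := by
  apply Finset.card_bij (fun x _ => (x.2.2.1, x.2.2.2, x.1, x.2.1))
  · intro a ha
    rw [Finset.mem_filter] at ha ⊢
    exact ⟨qf_swap_mem ha.1, hPQ a ha.2⟩
  · intro a₁ _ a₂ _ h
    have := congrArg (fun y : ℕ × ℕ × ℕ × ℕ => (y.2.2.1, y.2.2.2, y.1, y.2.1)) h
    simpa using this
  · intro b hb
    rw [Finset.mem_filter] at hb
    refine ⟨(b.2.2.1, b.2.2.2, b.1, b.2.1), ?_, rfl⟩
    rw [Finset.mem_filter]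
    exact ⟨qf_swap_mem hb.1, hQP b hb.2⟩

lemma card_QF_two_mul_blt {n : ℕ} (hn : n % 2 = 1) :
    (QF n).card = 2 * ((QF n).filter (fun x => x.1 < x.2.2.1)).card
      + ((QF n).filter (fun x => x.1 = x.2.2.1)).card := by
  have h1 := Finset.card_filter_add_card_filter_not
    (s := QF n) (fun x : ℕ × ℕ × ℕ × ℕ => x.1 < x.2.2.1)
  have h2 := Finset.card_filter_add_card_filter_not
    (s := (QF n).filter (fun x : ℕ × ℕ × ℕ × ℕ => ¬ x.1 < x.2.2.1))
    (fun x : ℕ × ℕ × ℕ × ℕ => x.1 = x.2.2.1)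
  have e1 : ((QF n).filter (fun x : ℕ × ℕ × ℕ × ℕ => ¬ x.1 < x.2.2.1)).filter
      (fun x : ℕ × ℕ × ℕ × ℕ => x.1 = x.2.2.1) = (QF n).filter (fun x => x.1 = x.2.2.1) := by
    rw [Finset.filter_filter]
    exact Finset.filter_congr (fun x _ => Iff.intro (fun h => h.2) (fun h => ⟨by omega, h⟩))
  have e2 : ((QF n).filter (fun x : ℕ × ℕ × ℕ × ℕ => ¬ x.1 < x.2.2.1)).filter
      (fun x : ℕ × ℕ × ℕ × ℕ => ¬ x.1 = x.2.2.1) = (QF n).filter (fun x => x.2.2.1 < x.1) := by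
    rw [Finset.filter_filter]
    exact Finset.filter_congr (fun x _ => Iff.intro (fun h => by omega) (fun h => ⟨by omega, by omega⟩))
  have e3 : ((QF n).filter (fun x => x.1 < x.2.2.1)).card
      = ((QF n).filter (fun x => x.2.2.1 < x.1)).card := by
    apply card_swap_filter
    · intro x hx; exact hx
    · intro x hx; exact hx
  rw [e1, e2] at h2
  omega

/-! ### `4 ∣ (QF n).card` -/

lemma sq_mod4 (a : ℕ) : a * a % 4 = 0 ∨ a * a % 4 = 1 := by
  rcases Nat.even_or_odd a with ⟨c, rfl⟩ | ⟨c, rfl⟩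
  · left
    have h : (c + c) * (c + c) = 4 * (c * c) := by ring
    rw [h]
    exact Nat.mul_mod_right 4 _
  · right
    have h : (2 * c + 1) * (2 * c + 1) = 1 + (c * c + c) * 4 := by ring
    rw [h]
    rw [Nat.add_mul_mod_self_right]

lemma not_sq_add_sq {n a b : ℕ} (hn : n % 4 = 3) (h : a * a + b * b = n) : False := by
  have h1 := sq_mod4 a
  have h2 := sq_mod4 b
  generalize a * a = u at h h1
  generalize b * b = v at h h2
  omega

/-- the pair-transposing involution. -/
def theta (x : ℕ × ℕ × ℕ × ℕ) : ℕ × ℕ × ℕ × ℕ :=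
  if x.1 = x.2.1 then (x.1, x.2.1, x.2.2.2, x.2.2.1) else (x.2.1, x.1, x.2.2.1, x.2.2.2)

lemma theta_mem {n : ℕ} {x : ℕ × ℕ × ℕ × ℕ}
    (hx : x ∈ (QF n).filter (fun x => x.1 * x.2.1 < x.2.2.1 * x.2.2.2)) :
    theta x ∈ (QF n).filter (fun x => x.1 * x.2.1 < x.2.2.1 * x.2.2.2) := by
  rw [Finset.mem_filter, mem_QF] at hx ⊢
  obtain ⟨⟨h1, h2, h3, h4, h5⟩, h6⟩ := hx
  unfold theta
  split
  · exact ⟨⟨h1, h2, h4, h3, by rw [Nat.mul_comm x.2.2.2]; exact h5⟩,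
      by rw [Nat.mul_comm x.2.2.2]; exact h6⟩
  · exact ⟨⟨h2, h1, h3, h4, by rw [Nat.mul_comm x.2.1]; exact h5⟩,
      by rw [Nat.mul_comm x.2.1]; exact h6⟩

lemma theta_invol (x : ℕ × ℕ × ℕ × ℕ) : theta (theta x) = x := by
  unfold theta
  by_cases h : x.1 = x.2.1
  · rw [if_pos h]
    dsimp only
    rw [if_pos h]
  · rw [if_neg h]
    dsimp only
    rw [if_neg (fun hh => h hh.symm)]

lemma theta_ne {n : ℕ} (hn4 : n % 4 = 3) {x : ℕ × ℕ × ℕ × ℕ}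
    (hx : x ∈ (QF n).filter (fun x => x.1 * x.2.1 < x.2.2.1 * x.2.2.2)) :
    theta x ≠ x := by
  rw [Finset.mem_filter, mem_QF] at hx
  obtain ⟨⟨h1, h2, h3, h4, h5⟩, h6⟩ := hx
  unfold theta
  split
  · rename_i heq
    intro hfix
    have e1 : x.2.2.2 = x.2.2.1 := congrArg (fun y : ℕ × ℕ × ℕ × ℕ => y.2.2.1) hfix
    apply not_sq_add_sq hn4 (a := x.1) (b := x.2.2.1)
    rw [← h5, ← heq, ← e1]
  · rename_i hne
    intro hfix
    exact hne (congrArg (fun y : ℕ × ℕ × ℕ × ℕ => y.1) hfix).symm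

lemma card_prodlt_even {n : ℕ} (hn4 : n % 4 = 3) :
    ((QF n).filter (fun x => x.1 * x.2.1 < x.2.2.1 * x.2.2.2)).card % 2 = 0 := by
  have hsum : ∑ _x ∈ (QF n).filter (fun x => x.1 * x.2.1 < x.2.2.1 * x.2.2.2),
      (1 : ZMod 2) = 0 := by
    refine Finset.sum_involution (fun x _ => theta x) ?_ ?_ ?_ ?_
    · intro a _; decide
    · intro a ha _; exact theta_ne hn4 ha
    · intro a ha; exact theta_mem ha
    · intro a ha; exact theta_invol a
  rw [Finset.sum_const, nsmul_eq_mul, mul_one] at hsum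
  have := (ZMod.natCast_eq_zero_iff _ 2).mp hsum
  omega

lemma card_QF_mod4 {n : ℕ} (hn4 : n % 4 = 3) : (QF n).card % 4 = 0 := by
  have hn2 : n % 2 = 1 := by omega
  have h1 := Finset.card_filter_add_card_filter_not
    (s := QF n) (fun x : ℕ × ℕ × ℕ × ℕ => x.1 * x.2.1 < x.2.2.1 * x.2.2.2)
  have e2 : (QF n).filter (fun x : ℕ × ℕ × ℕ × ℕ => ¬ x.1 * x.2.1 < x.2.2.1 * x.2.2.2)
      = (QF n).filter (fun x => x.2.2.1 * x.2.2.2 < x.1 * x.2.1) := by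
    apply Finset.filter_congr
    intro x hx
    rw [mem_QF] at hx
    obtain ⟨_, _, _, _, h5⟩ := hx
    set u := x.1 * x.2.1
    set v := x.2.2.1 * x.2.2.2
    constructor
    · intro h; omega
    · intro h; omega
  have e3 : ((QF n).filter (fun x => x.1 * x.2.1 < x.2.2.1 * x.2.2.2)).card
      = ((QF n).filter (fun x => x.2.2.1 * x.2.2.2 < x.1 * x.2.1)).card := by
    apply card_swap_filter
    · intro x hx; exact hx
    · intro x hx; exact hx
  have h4 := card_prodlt_even hn4
  rw [e2] at h1
  omega


/-! ### bijection: partitions with two distinct parts ↔ quadruples with `b₁ < b₂` -/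

lemma replicate_add_inj {b₁ m₁ b₂ m₂ b₁' m₁' b₂' m₂' : ℕ}
    (hb : b₁ < b₂) (hb' : b₁' < b₂') (hm₁ : 0 < m₁) (hm₂ : 0 < m₂)
    (hm₁' : 0 < m₁') (hm₂' : 0 < m₂')
    (h : Multiset.replicate m₁ b₁ + Multiset.replicate m₂ b₂
       = Multiset.replicate m₁' b₁' + Multiset.replicate m₂' b₂') :
    b₁ = b₁' ∧ m₁ = m₁' ∧ b₂ = b₂' ∧ m₂ = m₂' := by
  have ht := congrArg Multiset.toFinset h
  rw [Multiset.toFinset_add, Multiset.toFinset_add,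
      Multiset.toFinset_replicate, Multiset.toFinset_replicate,
      Multiset.toFinset_replicate, Multiset.toFinset_replicate,
      if_neg (by omega : ¬ m₁ = 0), if_neg (by omega : ¬ m₂ = 0),
      if_neg (by omega : ¬ m₁' = 0), if_neg (by omega : ¬ m₂' = 0)] at ht
  have m1 : b₁ ∈ ({b₁'} ∪ {b₂'} : Finset ℕ) := by rw [← ht]; simp
  have m2 : b₂ ∈ ({b₁'} ∪ {b₂'} : Finset ℕ) := by rw [← ht]; simp
  have m3 : b₁' ∈ ({b₁} ∪ {b₂} : Finset ℕ) := by rw [ht]; simp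
  have m4 : b₂' ∈ ({b₁} ∪ {b₂} : Finset ℕ) := by rw [ht]; simp
  simp only [Finset.mem_union, Finset.mem_singleton] at m1 m2 m3 m4
  have e1 : b₁ = b₁' := by omega
  have e2 : b₂ = b₂' := by omega
  subst e1
  subst e2
  have c1 := congrArg (Multiset.count b₁) h
  have c2 := congrArg (Multiset.count b₂) h
  simp only [Multiset.count_add, Multiset.count_replicate, eq_self_iff_true, if_true,
    if_neg (by omega : ¬ b₂ = b₁), if_neg (by omega : ¬ b₁ = b₂)] at c1 c2
  omega

def mkTwo {n : ℕ} (x : ℕ × ℕ × ℕ × ℕ) (hx : x ∈ (QF n).filter (fun x => x.1 < x.2.2.1)) :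
    Nat.Partition n := by
  rw [Finset.mem_filter, mem_QF] at hx
  refine ⟨Multiset.replicate x.2.1 x.1 + Multiset.replicate x.2.2.2 x.2.2.1, ?_, ?_⟩
  · intro i hi
    rcases Multiset.mem_add.mp hi with h | h
    · rw [Multiset.eq_of_mem_replicate h]; exact hx.1.1
    · rw [Multiset.eq_of_mem_replicate h]; exact hx.1.2.2.1
  · rw [Multiset.sum_add, Multiset.sum_replicate, Multiset.sum_replicate,
      smul_eq_mul, smul_eq_mul, Nat.mul_comm, Nat.mul_comm x.2.2.2]
    exact hx.1.2.2.2.2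

lemma mkTwo_parts {n : ℕ} (x : ℕ × ℕ × ℕ × ℕ)
    (hx : x ∈ (QF n).filter (fun x => x.1 < x.2.2.1)) :
    (mkTwo x hx).parts = Multiset.replicate x.2.1 x.1 + Multiset.replicate x.2.2.2 x.2.2.1 := by
  unfold mkTwo
  simp

lemma card_P2_eq {n : ℕ} :
    ((QF n).filter (fun x => x.1 < x.2.2.1)).card
      = (Finset.univ.filter fun p : Nat.Partition n => p.parts.toFinset.card = 2).card := by
  apply Finset.card_bij (fun x hx => mkTwo x hx)
  · intro a ha
    rw [Finset.mem_filter]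
    refine ⟨Finset.mem_univ _, ?_⟩
    have hm := ha
    rw [Finset.mem_filter, mem_QF] at hm
    obtain ⟨⟨h1, h2, h3, h4, h5⟩, h6⟩ := hm
    rw [mkTwo_parts a ha, Multiset.toFinset_add, Multiset.toFinset_replicate,
      Multiset.toFinset_replicate, if_neg (by omega : ¬ a.2.1 = 0),
      if_neg (by omega : ¬ a.2.2.2 = 0)]
    have hset : ({a.1} ∪ {a.2.2.1} : Finset ℕ) = {a.1, a.2.2.1} := by
      ext y
      simp [or_comm]
    rw [hset, Finset.card_pair (by omega)]
  · intro a₁ ha₁ a₂ ha₂ h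
    have hp := congrArg Nat.Partition.parts h
    rw [mkTwo_parts a₁ ha₁, mkTwo_parts a₂ ha₂] at hp
    have hm₁ := ha₁; have hm₂ := ha₂
    rw [Finset.mem_filter, mem_QF] at hm₁ hm₂
    obtain ⟨⟨p1, p2, p3, p4, p5⟩, p6⟩ := hm₁
    obtain ⟨⟨q1, q2, q3, q4, q5⟩, q6⟩ := hm₂
    obtain ⟨e1, e2, e3, e4⟩ := replicate_add_inj p6 q6 p2 p4 q2 q4 hp
    have : a₁ = (a₁.1, a₁.2.1, a₁.2.2.1, a₁.2.2.2) := rfl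
    rw [this, e1, e2, e3, e4]
  · intro p hp
    rw [Finset.mem_filter] at hp
    obtain ⟨b₁, m₁, b₂, m₂, hlt, hb₁, hm₁, hm₂, hrep, hsum⟩ :=
      exists_two_of_card_two p hp.2
    have hmem : (b₁, m₁, b₂, m₂) ∈ (QF n).filter (fun x => x.1 < x.2.2.1) := by
      rw [Finset.mem_filter, mem_QF]
      refine ⟨⟨hb₁, hm₁, ?_, hm₂, ?_⟩, hlt⟩
      · show 0 < b₂
        omega
      · show b₁ * m₁ + b₂ * m₂ = n
        rw [Nat.mul_comm b₁ m₁, Nat.mul_comm b₂ m₂]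
        exact hsum
    refine ⟨(b₁, m₁, b₂, m₂), hmem, ?_⟩
    apply Nat.Partition.ext
    rw [mkTwo_parts _ hmem, hrep]

/-! ### `A + D = σ(n)` -/

/-- pairs `⟨d, j⟩` with `d ∣ n` and `1 ≤ j ≤ d`; it has `σ(n)` elements. -/
def SS (n : ℕ) : Finset ((_ : ℕ) × ℕ) := n.divisors.sigma (fun d => Finset.Icc 1 d)

lemma card_SS (n : ℕ) : (SS n).card = ∑ d ∈ n.divisors, d := by
  unfold SS
  rw [Finset.card_sigma]
  refine Finset.sum_congr rfl (fun d _ => ?_)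
  rw [Nat.card_Icc]
  omega

def mkOne {n : ℕ} (hn : 0 < n) (d : ℕ) (hd : d ∈ n.divisors) : Nat.Partition n :=
  ⟨Multiset.replicate d (n / d),
   fun hi => by
     rw [Multiset.eq_of_mem_replicate hi]
     exact Nat.div_pos (Nat.le_of_dvd hn (Nat.mem_divisors.mp hd).1)
       (Nat.pos_of_mem_divisors hd),
   by
     rw [Multiset.sum_replicate, smul_eq_mul, Nat.mul_comm]
     exact Nat.div_mul_cancel (Nat.mem_divisors.mp hd).1⟩

lemma mkOne_parts {n : ℕ} (hn : 0 < n) (d : ℕ) (hd : d ∈ n.divisors) :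
    (mkOne hn d hd).parts = Multiset.replicate d (n / d) := rfl

lemma card_SS_eq {n : ℕ} (hn : 0 < n) :
    ((SS n).filter (fun x => x.2 = x.1)).card
      = (Finset.univ.filter fun p : Nat.Partition n => p.parts.toFinset.card = 1).card := by
  apply Finset.card_bij (fun x hx =>
    mkOne hn x.1 (Finset.mem_sigma.mp (Finset.mem_filter.mp hx).1).1)
  · intro a ha
    rw [Finset.mem_filter]
    refine ⟨Finset.mem_univ _, ?_⟩
    have hd := (Finset.mem_sigma.mp (Finset.mem_filter.mp ha).1).1
    have hdpos : 0 < a.1 := Nat.pos_of_mem_divisors hd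
    rw [mkOne_parts hn a.1 hd, Multiset.toFinset_replicate, if_neg (by omega : ¬ a.1 = 0)]
    exact Finset.card_singleton _
  · intro a₁ ha₁ a₂ ha₂ h
    have hp := congrArg Nat.Partition.parts h
    rw [mkOne_parts, mkOne_parts] at hp
    have hcard := congrArg Multiset.card hp
    rw [Multiset.card_replicate, Multiset.card_replicate] at hcard
    have hj₁ : a₁.2 = a₁.1 := (Finset.mem_filter.mp ha₁).2
    have hj₂ : a₂.2 = a₂.1 := (Finset.mem_filter.mp ha₂).2
    exact Sigma.ext hcard (heq_of_eq (by omega))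
  · intro p hp
    rw [Finset.mem_filter] at hp
    obtain ⟨b, m, hb, hm, hrep, hmb⟩ := exists_replicate_of_card_one p hp.2
    have hdvd : m ∣ n := ⟨b, hmb.symm⟩
    have hmem : (⟨m, m⟩ : (_ : ℕ) × ℕ) ∈ (SS n).filter (fun x => x.2 = x.1) := by
      rw [Finset.mem_filter]
      refine ⟨Finset.mem_sigma.mpr ⟨Nat.mem_divisors.mpr ⟨hdvd, hn.ne'⟩, ?_⟩, rfl⟩
      show m ∈ Finset.Icc 1 m
      rw [Finset.mem_Icc]
      omega
    refine ⟨⟨m, m⟩, hmem, ?_⟩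
    apply Nat.Partition.ext
    rw [mkOne_parts, hrep]
    have : n / m = b := by
      rw [← hmb, Nat.mul_div_cancel_left b hm]
    rw [this]

lemma card_SS_ne {n : ℕ} (hn : 0 < n) :
    ((SS n).filter (fun x => ¬ x.2 = x.1)).card
      = ((QF n).filter (fun x => x.1 = x.2.2.1)).card := by
  apply Finset.card_bij (fun x _ => ((n / x.1, x.2, n / x.1, x.1 - x.2) : ℕ × ℕ × ℕ × ℕ))
  · intro a ha
    rw [Finset.mem_filter] at ha
    obtain ⟨hmem, hne⟩ := ha
    obtain ⟨hd, hj⟩ := Finset.mem_sigma.mp hmem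
    obtain ⟨hdvd, hne0⟩ := Nat.mem_divisors.mp hd
    have hdpos : 0 < a.1 := Nat.pos_of_mem_divisors hd
    rw [Finset.mem_Icc] at hj
    rw [Finset.mem_filter, mem_QF]
    have hq : 0 < n / a.1 := Nat.div_pos (Nat.le_of_dvd hn hdvd) hdpos
    refine ⟨⟨hq, ?_, hq, ?_, ?_⟩, rfl⟩
    · show 0 < a.2
      omega
    · show 0 < a.1 - a.2
      omega
    show n / a.1 * a.2 + n / a.1 * (a.1 - a.2) = n
    rw [← Nat.mul_add]
    have : a.2 + (a.1 - a.2) = a.1 := by omega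
    rw [this]
    exact Nat.div_mul_cancel hdvd
  · intro a₁ ha₁ a₂ ha₂ h
    rw [Finset.mem_filter] at ha₁ ha₂
    obtain ⟨hj₁⟩ := Finset.mem_sigma.mp ha₁.1
    obtain ⟨hj₂⟩ := Finset.mem_sigma.mp ha₂.1
    rw [Finset.mem_Icc] at *
    have e2 : a₁.2 = a₂.2 := congrArg (fun y : ℕ × ℕ × ℕ × ℕ => y.2.1) h
    have e4 : a₁.1 - a₁.2 = a₂.1 - a₂.2 := congrArg (fun y : ℕ × ℕ × ℕ × ℕ => y.2.2.2) h
    have hj₁' := (Finset.mem_sigma.mp ha₁.1).2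
    have hj₂' := (Finset.mem_sigma.mp ha₂.1).2
    rw [Finset.mem_Icc] at hj₁' hj₂'
    have hne₁ := ha₁.2
    have hne₂ := ha₂.2
    refine Sigma.ext ?_ (heq_of_eq e2)
    omega
  · intro x hx
    rw [Finset.mem_filter, mem_QF] at hx
    obtain ⟨⟨h1, h2, h3, h4, h5⟩, heq⟩ := hx
    have hsum : x.1 * (x.2.1 + x.2.2.2) = n := by
      rw [Nat.mul_add]
      rw [← heq] at h5
      exact h5
    have hdvd : (x.2.1 + x.2.2.2) ∣ n := ⟨x.1, by rw [Nat.mul_comm]; exact hsum.symm⟩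
    have hmem : (⟨x.2.1 + x.2.2.2, x.2.1⟩ : (_ : ℕ) × ℕ) ∈
        (SS n).filter (fun y => ¬ y.2 = y.1) := by
      rw [Finset.mem_filter]
      refine ⟨Finset.mem_sigma.mpr ⟨Nat.mem_divisors.mpr ⟨hdvd, hn.ne'⟩, ?_⟩, ?_⟩
      · show x.2.1 ∈ Finset.Icc 1 (x.2.1 + x.2.2.2)
        rw [Finset.mem_Icc]
        omega
      · show ¬ x.2.1 = x.2.1 + x.2.2.2
        omega
    refine ⟨⟨x.2.1 + x.2.2.2, x.2.1⟩, hmem, ?_⟩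
    have hb : n / (x.2.1 + x.2.2.2) = x.1 := by
      rw [← hsum, Nat.mul_div_cancel x.1 (by omega : 0 < x.2.1 + x.2.2.2)]
    have hxeta : x = (x.1, x.2.1, x.2.2.1, x.2.2.2) := rfl
    rw [hxeta, ← heq]
    have hm2 : x.2.1 + x.2.2.2 - x.2.1 = x.2.2.2 := by omega
    rw [hb, hm2]

lemma A_add_D {n : ℕ} (hn : 0 < n) :
    (Finset.univ.filter fun p : Nat.Partition n => p.parts.toFinset.card = 1).card
      + ((QF n).filter (fun x => x.1 = x.2.2.1)).card
      = ∑ d ∈ n.divisors, d := by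
  rw [← card_SS_eq hn, ← card_SS_ne hn, ← card_SS n]
  exact Finset.card_filter_add_card_filter_not _

/-! ### `4 ∣ σ(n)` for `n ≡ 3 [MOD 4]` -/

lemma sigma_mod4 {n : ℕ} (hn4 : n % 4 = 3) : (∑ d ∈ n.divisors, d) % 4 = 0 := by
  have key : ∀ a b : ZMod 4, a * b = 3 → a + b = 0 := by decide
  have key2 : ∀ a : ZMod 4, ¬ a * a = 3 := by decide
  have hn3 : ((n : ℕ) : ZMod 4) = 3 := by
    rw [← ZMod.natCast_mod, hn4]
    rfl
  have hzero : (∑ d ∈ n.divisors, ((d : ZMod 4))) = 0 := by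
    refine Finset.sum_involution (fun d hd => n / d) ?_ ?_ ?_ ?_
    · intro d hd
      obtain ⟨hdvd, hne⟩ := Nat.mem_divisors.mp hd
      refine key _ _ ?_
      rw [← Nat.cast_mul, Nat.mul_div_cancel' hdvd, hn3]
    · intro d hd _
      intro hfix
      obtain ⟨hdvd, hne⟩ := Nat.mem_divisors.mp hd
      apply key2 ((d : ℕ) : ZMod 4)
      have hfix' : n / d = d := hfix
      have : d * d = n := by
        have h := Nat.mul_div_cancel' hdvd
        rw [hfix'] at h
        exact h
      rw [← Nat.cast_mul, this, hn3]
    · intro d hd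
      obtain ⟨hdvd, hne⟩ := Nat.mem_divisors.mp hd
      exact Nat.mem_divisors.mpr ⟨Nat.div_dvd_of_dvd hdvd, hne⟩
    · intro d hd
      obtain ⟨hdvd, hne⟩ := Nat.mem_divisors.mp hd
      exact Nat.div_div_self hdvd hne
  rw [← Nat.cast_sum] at hzero
  have := (ZMod.natCast_eq_zero_iff _ 4).mp hzero
  omega

end Stmt7Aux

theorem stmt_7 : ∀ n : ℕ, (8 : ℤ) ∣ SOMEbar (4 * n + 3) := by
  intro N
  set n := 4 * N + 3 with hdefn
  have hn4 : n % 4 = 3 := by omega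
  have hn2 : n % 2 = 1 := by omega
  have hpos : 0 < n := by omega
  have h1 := Stmt7Aux.somebar_zmod n hn2
  set A := (Finset.univ.filter fun p : Nat.Partition n => p.parts.toFinset.card = 1).card with hA
  set B := (Finset.univ.filter fun p : Nat.Partition n => p.parts.toFinset.card = 2).card with hB
  set D := ((Stmt7Aux.QF n).filter (fun x => x.1 = x.2.2.1)).card with hD
  have h2 : (Stmt7Aux.QF n).card = 2 * B + D := by
    rw [Stmt7Aux.card_QF_two_mul_blt hn2, Stmt7Aux.card_P2_eq]
  have h3 : A + D = ∑ d ∈ n.divisors, d := Stmt7Aux.A_add_D hpos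
  have h4 : (Stmt7Aux.QF n).card % 4 = 0 := Stmt7Aux.card_QF_mod4 hn4
  have h5 : (∑ d ∈ n.divisors, d) % 4 = 0 := Stmt7Aux.sigma_mod4 hn4
  obtain ⟨q, hq⟩ : ∃ q, (Stmt7Aux.QF n).card = 4 * q := ⟨(Stmt7Aux.QF n).card / 4, by omega⟩
  obtain ⟨s, hs⟩ : ∃ s, (∑ d ∈ n.divisors, d) = 4 * s := ⟨(∑ d ∈ n.divisors, d) / 4, by omega⟩
  obtain ⟨t, ht⟩ : ∃ t, 2 * n = 8 * t + 6 := ⟨N, by omega⟩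
  have e1n : 4 * q = 2 * B + D := by omega
  have e2n : A + D = 4 * s := by omega
  have e1 : (4 : ZMod 8) * (q : ZMod 8) = 2 * (B : ZMod 8) + (D : ZMod 8) := by
    exact_mod_cast congrArg (Nat.cast (R := ZMod 8)) e1n
  have e2 : (A : ZMod 8) + (D : ZMod 8) = 4 * (s : ZMod 8) := by
    exact_mod_cast congrArg (Nat.cast (R := ZMod 8)) e2n
  have e3 : 2 * (n : ZMod 8) = 8 * (t : ZMod 8) + 6 := by
    exact_mod_cast congrArg (Nat.cast (R := ZMod 8)) ht
  have h8 : (8 : ZMod 8) = 0 := by decide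
  have f1 : (4 : ZMod 8) * (B : ZMod 8) + 2 * (D : ZMod 8) = 0 := by
    linear_combination (-2 : ZMod 8) * e1 + (q : ZMod 8) * h8
  have f2 : (2 : ZMod 8) * (A : ZMod 8) + 2 * (D : ZMod 8) = 0 := by
    linear_combination (2 : ZMod 8) * e2 + (s : ZMod 8) * h8
  have hz : ((SOMEbar n : ℤ) : ZMod 8) = 0 := by
    rw [h1]
    linear_combination (A : ZMod 8) * e3 + f1 - f2
      + ((A : ZMod 8) * (t : ZMod 8) + (A : ZMod 8)) * h8
  have hdvd := (ZMod.intCast_zmod_eq_zero_iff_dvd (SOMEbar n) 8).mp hz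
  exact_mod_cast hdvd
end
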